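/- arXiv:math/9806166 — 4 statements merged into one kernel-verified Lean document; each statement's English description precedes it below -/
import Mathlib

section
/- Let M be a transitive model of ZFC and let f ∈ ω^ω be a function that eventually dominates every function g ∈ ω^ω ∩ M. If D ⊆ 𝔻 ∩ M is a dense subset of the Hechler forcing 𝔻 as computed in M, with D ∈ M, then D ∩ 𝔻(f) is dense in 𝔻(f) ∩ M. -/
noncomputable section

open ZFSet

/-! ### Internal first-order language of set theory and satisfaction in a set `M` -/

/-- First-order formulas of set theory, with de Bruijn variables. -/
inductive Fml : ℕ → Type
  | mem {n} (i j : Fin n) : Fml n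
  | eq {n} (i j : Fin n) : Fml n
  | imp {n} : Fml n → Fml n → Fml n
  | neg {n} : Fml n → Fml n
  | all {n} : Fml (n + 1) → Fml n

namespace Fml

def and {n} (φ ψ : Fml n) : Fml n := neg (imp φ (neg ψ))
def or {n} (φ ψ : Fml n) : Fml n := imp (neg φ) ψ
def iff {n} (φ ψ : Fml n) : Fml n := (imp φ ψ).and (imp ψ φ)
def ex {n} (φ : Fml (n + 1)) : Fml n := neg (all (neg φ))

/-- Variable renaming. -/
def rename : ∀ {m k : ℕ}, (Fin m → Fin k) → Fml m → Fml k
  | _, _, r, mem i j => mem (r i) (r j)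
  | _, _, r, eq i j => eq (r i) (r j)
  | _, _, r, imp φ ψ => imp (rename r φ) (rename r ψ)
  | _, _, r, neg φ => neg (rename r φ)
  | _, _, r, all φ => all (rename (fun i => Fin.cases 0 (fun j => (r j).succ) i) φ)

end Fml

/-- Satisfaction of a formula in the structure `(M, ∈)`, with valuation `v`. -/
def SatM (M : ZFSet) : ∀ {n : ℕ}, Fml n → (Fin n → ZFSet) → Prop
  | _, .mem i j, v => v i ∈ v j
  | _, .eq i j, v => v i = v j
  | _, .imp φ ψ, v => SatM M φ v → SatM M ψ v
  | _, .neg φ, v => ¬ SatM M φ v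
  | _, .all φ, v => ∀ x : ZFSet, x ∈ M → SatM M φ (Fin.cons x v)

/-- Satisfaction for all valuations into `M`. -/
def SatAll (M : ZFSet) {n : ℕ} (φ : Fml n) : Prop :=
  ∀ v : Fin n → ZFSet, (∀ i, v i ∈ M) → SatM M φ v

/-! The axioms of ZFC. -/

def axExt : Fml 2 := .imp (.all (.iff (.mem 0 1) (.mem 0 2))) (.eq 0 1)
def axPair : Fml 2 := .ex (.and (.mem 1 0) (.mem 2 0))
def axUnion : Fml 1 := .ex (.all (.all (.imp (.and (.mem 0 1) (.mem 1 3)) (.mem 0 2))))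
def axPower : Fml 1 := .ex (.all (.imp (.all (.imp (.mem 0 1) (.mem 0 3))) (.mem 0 1)))
def axInf : Fml 0 :=
  .ex (.and (.ex (.and (.mem 0 1) (.all (.neg (.mem 0 1)))))
    (.all (.imp (.mem 0 1)
      (.ex (.and (.mem 0 2) (.and (.mem 1 0)
        (.all (.iff (.mem 0 1) (.or (.mem 0 2) (.eq 0 2))))))))))
def axFound : Fml 1 :=
  .imp (.ex (.mem 0 1)) (.ex (.and (.mem 0 1) (.all (.imp (.mem 0 1) (.neg (.mem 0 2))))))
def axChoice : Fml 1 :=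
  .imp
    (.and (.all (.imp (.mem 0 1) (.ex (.mem 0 1))))
      (.all (.imp (.mem 0 1) (.all (.imp (.mem 0 2)
        (.imp (.neg (.eq 1 0)) (.neg (.ex (.and (.mem 0 2) (.mem 0 1))))))))))
    (.ex (.all (.imp (.mem 0 2) (.ex (.and (.mem 0 1) (.and (.mem 0 2)
      (.all (.imp (.and (.mem 0 2) (.mem 0 3)) (.eq 0 1)))))))))

/-- Separation axiom for the formula `φ(x, p₁, …, pₙ)`. -/
def axSep {n : ℕ} (φ : Fml (n + 1)) : Fml (n + 1) :=
  .ex (.all (.iff (.mem 0 1) (.and (.mem 0 2)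
    (φ.rename (fun i => Fin.cases 0 (fun j => j.succ.succ.succ) i)))))

/-- Collection axiom for the formula `φ(x, y, p₁, …, pₙ)`. -/
def axColl {n : ℕ} (φ : Fml (n + 2)) : Fml (n + 1) :=
  .imp
    (.all (.imp (.mem 0 1)
      (.ex (φ.rename (fun i =>
        Fin.cases 1 (fun i' => Fin.cases 0 (fun j => j.succ.succ.succ) i') i)))))
    (.ex (.all (.imp (.mem 0 2) (.ex (.and (.mem 0 2)
      (φ.rename (fun i =>
        Fin.cases 1 (fun i' => Fin.cases 0 (fun j => j.succ.succ.succ.succ) i') i)))))))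

/-- `M` is a transitive model of ZFC (with the collection scheme). -/
def IsTransModelZFC (M : ZFSet) : Prop :=
  M.IsTransitive ∧ SatAll M axExt ∧ SatAll M axPair ∧ SatAll M axUnion ∧
    SatAll M axPower ∧ SatAll M axInf ∧ SatAll M axFound ∧ SatAll M axChoice ∧
    (∀ (n : ℕ) (φ : Fml (n + 1)), SatAll M (axSep φ)) ∧
    (∀ (n : ℕ) (φ : Fml (n + 2)), SatAll M (axColl φ))

/-! ### Coding countable objects as elements of `ZFSet` -/

/-- The von Neumann natural numbers. -/
def natZF : ℕ → ZFSet
  | 0 => ∅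
  | n + 1 => insert (natZF n) (natZF n)

/-- The code of a function `ℕ → ℕ` as a set of Kuratowski pairs. -/
def funZF (f : ℕ → ℕ) : ZFSet :=
  ZFSet.range fun n : ℕ => ZFSet.pair (natZF n) (natZF (f n))

/-- The code of a finite sequence of naturals. -/
def listZF (l : List ℕ) : ZFSet :=
  ZFSet.range fun i : Fin l.length => ZFSet.pair (natZF i) (natZF (l.get i))

/-- The code of a set of finite sequences of naturals. -/
def listSetZF (D : Set (List ℕ)) : ZFSet :=
  ZFSet.range fun l : D => listZF l.1

end

noncomputable section

open Filter

/-! ### The Hechler forcing -/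

/-- Hechler conditions: a finite sequence `a` of naturals and a finite side set `A` of
functions in `ω^ω`. -/
abbrev HechlerCond := List ℕ × Finset (ℕ → ℕ)

/-- The body of a Hechler condition: values of `a` on its domain, and the pointwise
maximum of the side functions elsewhere. -/
def hechlerBody (p : HechlerCond) : ℕ → ℕ := fun n =>
  if n < p.1.length then p.1.getD n 0 else p.2.sup fun g => g n

/-- The Hechler order: `q ≤ p` iff `a_p ⊆ a_q`, `A_p ⊆ A_q`, and the new values of `a_q`
dominate all side functions of `p`. -/
def hechlerLe (q p : HechlerCond) : Prop :=
  p.1 <+: q.1 ∧ p.2 ⊆ q.2 ∧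
    ∀ n : ℕ, p.1.length ≤ n → n < q.1.length → ∀ g ∈ p.2, g n ≤ q.1.getD n 0

/-- The code of a finite set of functions `ℕ → ℕ`. -/
def finsetFunZF (A : Finset (ℕ → ℕ)) : ZFSet :=
  ZFSet.range fun g : {g : ℕ → ℕ // g ∈ A} => funZF g.1

/-- The code of a Hechler condition. -/
def hechlerCondZF (p : HechlerCond) : ZFSet := ZFSet.pair (listZF p.1) (finsetFunZF p.2)

/-- The code of a set of Hechler conditions. -/
def hechlerSetZF (D : Set HechlerCond) : ZFSet :=
  ZFSet.range fun q : D => hechlerCondZF q.1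
/-! ### V-level coding lemmas -/

namespace HechlerAux

open ZFSet

lemma subset_of_mem_of_transitive {M x : ZFSet} (hM : M.IsTransitive) (h : x ∈ M) : x ⊆ M :=
  hM x h

lemma notMem_of_subset {x y : ZFSet} (h : x ⊆ y) : y ∉ x := fun hy =>
  ZFSet.mem_irrefl y (h hy)

lemma natZF_mem_of_lt : ∀ {m n : ℕ}, m < n → natZF m ∈ natZF n := by
  intro m n h
  induction n with
  | zero => omega
  | succ k ih =>
    rcases Nat.lt_succ_iff_lt_or_eq.1 h with h' | rfl
    · exact ZFSet.mem_insert_of_mem _ (ih h')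
    · exact ZFSet.mem_insert _ _

lemma natZF_subset_of_le {m n : ℕ} (h : m ≤ n) : natZF m ⊆ natZF n := by
  induction n with
  | zero => have : m = 0 := by omega
            subst this; exact fun x hx => hx
  | succ k ih =>
    rcases Nat.le_succ_iff.1 h with h' | rfl
    · exact fun x hx => ZFSet.mem_insert_of_mem _ (ih h' hx)
    · exact fun x hx => hx

lemma natZF_mem_iff {m n : ℕ} : natZF m ∈ natZF n ↔ m < n := by
  refine ⟨fun h => ?_, natZF_mem_of_lt⟩
  by_contra hn
  exact notMem_of_subset (natZF_subset_of_le (by omega : n ≤ m)) h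

lemma natZF_subset_iff {m n : ℕ} : natZF m ⊆ natZF n ↔ m ≤ n := by
  refine ⟨fun h => ?_, natZF_subset_of_le⟩
  by_contra hn
  exact ZFSet.mem_irrefl _ (h (natZF_mem_of_lt (by omega)))

lemma natZF_inj {m n : ℕ} (h : natZF m = natZF n) : m = n := by
  have h1 : m ≤ n := natZF_subset_iff.1 (h ▸ fun x hx => hx)
  have h2 : n ≤ m := natZF_subset_iff.1 (h ▸ fun x hx => hx)
  omega

lemma mem_natZF {x : ZFSet} {n : ℕ} : x ∈ natZF n ↔ ∃ m < n, x = natZF m := by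
  induction n with
  | zero => simp [natZF, ZFSet.notMem_empty]
  | succ k ih =>
    simp only [natZF, ZFSet.mem_insert_iff, ih]
    constructor
    · rintro (rfl | ⟨m, hm, rfl⟩)
      · exact ⟨k, by omega, rfl⟩
      · exact ⟨m, by omega, rfl⟩
    · rintro ⟨m, hm, rfl⟩
      rcases Nat.lt_succ_iff_lt_or_eq.1 hm with h' | rfl
      · exact Or.inr ⟨m, h', rfl⟩
      · exact Or.inl rfl

lemma mem_funZF {g : ℕ → ℕ} {x : ZFSet} :
    x ∈ funZF g ↔ ∃ n, x = ZFSet.pair (natZF n) (natZF (g n)) := by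
  simp only [funZF, ZFSet.mem_range, Set.mem_range]
  exact ⟨fun ⟨n, h⟩ => ⟨n, h.symm⟩, fun ⟨n, h⟩ => ⟨n, h.symm⟩⟩

lemma pair_mem_funZF {g : ℕ → ℕ} {n : ℕ} {y : ZFSet} :
    ZFSet.pair (natZF n) y ∈ funZF g ↔ y = natZF (g n) := by
  rw [mem_funZF]
  constructor
  · rintro ⟨m, hm⟩
    obtain ⟨h1, h2⟩ := ZFSet.pair_injective hm
    rwa [natZF_inj h1] 
  · rintro rfl; exact ⟨n, rfl⟩

lemma mem_listZF {l : List ℕ} {x : ZFSet} :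
    x ∈ listZF l ↔ ∃ i : ℕ, i < l.length ∧ x = ZFSet.pair (natZF i) (natZF (l.getD i 0)) := by
  simp only [listZF, ZFSet.mem_range, Set.mem_range]
  constructor
  · rintro ⟨i, rfl⟩
    exact ⟨i, i.2, by rw [List.getD_eq_getElem _ _ i.2]; rfl⟩
  · rintro ⟨i, hi, rfl⟩
    refine ⟨⟨i, hi⟩, ?_⟩
    rw [List.getD_eq_getElem _ _ hi]; rfl

lemma pair_mem_listZF {l : List ℕ} {n : ℕ} {y : ZFSet} :
    ZFSet.pair (natZF n) y ∈ listZF l ↔ n < l.length ∧ y = natZF (l.getD n 0) := by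
  rw [mem_listZF]
  constructor
  · rintro ⟨i, hi, h⟩
    obtain ⟨h1, h2⟩ := ZFSet.pair_injective h
    obtain rfl := natZF_inj h1
    exact ⟨hi, h2⟩
  · rintro ⟨hn, rfl⟩; exact ⟨n, hn, rfl⟩

lemma mem_finsetFunZF {A : Finset (ℕ → ℕ)} {x : ZFSet} :
    x ∈ finsetFunZF A ↔ ∃ g ∈ A, x = funZF g := by
  simp only [finsetFunZF, ZFSet.mem_range, Set.mem_range]
  exact ⟨fun ⟨⟨g, hg⟩, h⟩ => ⟨g, hg, h.symm⟩, fun ⟨g, hg, h⟩ => ⟨⟨g, hg⟩, h.symm⟩⟩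

lemma mem_hechlerSetZF {D : Set HechlerCond} {x : ZFSet} :
    x ∈ hechlerSetZF D ↔ ∃ q ∈ D, x = hechlerCondZF q := by
  simp only [hechlerSetZF, ZFSet.mem_range, Set.mem_range]
  exact ⟨fun ⟨⟨q, hq⟩, h⟩ => ⟨q, hq, h.symm⟩, fun ⟨q, hq, h⟩ => ⟨⟨q, hq⟩, h.symm⟩⟩

lemma listZF_subset_of_prefix {a b : List ℕ} (h : a <+: b) : listZF a ⊆ listZF b := by
  intro x hx
  rw [mem_listZF] at hx ⊢
  obtain ⟨i, hi, rfl⟩ := hx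
  refine ⟨i, lt_of_lt_of_le hi h.length_le, ?_⟩
  rw [List.getD_eq_getElem _ _ hi, List.getD_eq_getElem _ _ (lt_of_lt_of_le hi h.length_le),
    h.getElem hi]

lemma prefix_of_listZF_subset {a b : List ℕ} (h : listZF a ⊆ listZF b) : a <+: b := by
  have hlen : a.length ≤ b.length := by
    rcases Nat.eq_zero_or_pos a.length with h0 | h0
    · omega
    · have := h (mem_listZF.2 ⟨a.length - 1, by omega, rfl⟩)
      rw [mem_listZF] at this
      obtain ⟨i, hi, hp⟩ := this
      obtain ⟨h1, _⟩ := ZFSet.pair_injective hp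
      obtain rfl := natZF_inj h1
      omega
  rw [List.prefix_iff_eq_take]
  refine List.ext_getElem (by simp; omega) ?_
  intro i hi hi2
  have := h (mem_listZF.2 ⟨i, hi, rfl⟩)
  rw [pair_mem_listZF] at this
  have h2 := natZF_inj this.2
  simp only [List.getElem_take]
  rw [List.getD_eq_getElem _ _ hi] at h2
  rw [List.getD_eq_getElem _ _ this.1] at h2
  exact h2.symm ▸ rfl

end HechlerAux
namespace HechlerAux

open ZFSet

/-! ### Hechler condition lemmas -/

lemma prefix_getD {a b : List ℕ} (h : a <+: b) {n : ℕ} (hn : n < a.length) :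
    b.getD n 0 = a.getD n 0 := by
  rw [List.getD_eq_getElem _ _ hn, List.getD_eq_getElem _ _ (lt_of_lt_of_le hn h.length_le),
    h.getElem hn]

lemma hechlerLe_trans {r q p : HechlerCond} (h1 : hechlerLe r q) (h2 : hechlerLe q p) :
    hechlerLe r p := by
  obtain ⟨hp1, hp2, hp3⟩ := h2
  obtain ⟨hq1, hq2, hq3⟩ := h1
  refine ⟨hp1.trans hq1, fun g hg => hq2 (hp2 hg), fun n hn hn' g hg => ?_⟩
  by_cases hc : n < q.1.length
  · have := hp3 n hn hc g hg
    rwa [prefix_getD hq1 hc]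
  · exact hq3 n (by omega) hn' g (hp2 hg)

/-- The canonical extension of the stem of `p` to length `≥ N` using the body. -/
def extList (p : HechlerCond) (N : ℕ) : List ℕ :=
  (List.range (max N p.1.length)).map (hechlerBody p)

lemma extList_length {p : HechlerCond} {N : ℕ} : (extList p N).length = max N p.1.length := by
  simp [extList]

lemma extList_getD {p : HechlerCond} {N n : ℕ} (h : n < max N p.1.length) :
    (extList p N).getD n 0 = hechlerBody p n := by
  rw [List.getD_eq_getElem _ _ (by simpa [extList_length] using h)]
  simp [extList]

lemma self_getD_body {p : HechlerCond} {n : ℕ} (h : n < p.1.length) :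
    p.1.getD n 0 = hechlerBody p n := by
  simp [hechlerBody, h]

lemma extList_prefix {p : HechlerCond} {N : ℕ} : p.1 <+: extList p N := by
  rw [List.prefix_iff_eq_take]
  refine List.ext_getElem (by simp [extList_length, Nat.min_def]) ?_
  intro i hi hi2
  simp only [List.getElem_take]
  have h1 : i < max N p.1.length := by omega
  have h2 := extList_getD (p := p) (N := N) h1
  rw [List.getD_eq_getElem _ _ (by simpa [extList_length] using h1)] at h2
  rw [h2, hechlerBody, if_pos hi, List.getD_eq_getElem _ _ hi]

/-- extCond: the condition with extended stem. -/
def extCond (p : HechlerCond) (N : ℕ) : HechlerCond := (extList p N, p.2)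

lemma extCond_le {p : HechlerCond} {N : ℕ} : hechlerLe (extCond p N) p := by
  refine ⟨extList_prefix, fun g hg => hg, fun n hn hn' g hg => ?_⟩
  have hn'' : n < max N p.1.length := by simpa [extCond, extList_length] using hn'
  show g n ≤ (extList p N).getD n 0
  rw [extList_getD hn'', hechlerBody, if_neg (by omega)]
  exact Finset.le_sup (f := fun g => g n) hg

lemma extCond_body {p : HechlerCond} {N : ℕ} (n : ℕ) :
    hechlerBody (extCond p N) n = hechlerBody p n := by
  by_cases h : n < max N p.1.length
  · rw [hechlerBody]
    have : n < (extCond p N).1.length := by simpa [extCond, extList_length] using h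
    rw [if_pos this]
    exact extList_getD h
  · rw [hechlerBody, if_neg (by simp [extCond, extList_length]; omega), hechlerBody,
      if_neg (by omega)]
    rfl

lemma hechlerLe_body_le {q p : HechlerCond} (h : hechlerLe q p) (n : ℕ)
    (hn : n < q.1.length) (hn2 : p.1.length ≤ n) : hechlerBody p n ≤ q.1.getD n 0 := by
  rw [hechlerBody, if_neg (by omega)]
  exact Finset.sup_le fun g hg => h.2.2 n hn2 hn g hg

end HechlerAux
namespace HechlerAux

open ZFSet

/-! ### Renaming and satisfaction -/

lemma satM_rename (M : ZFSet) : ∀ {m k : ℕ} (φ : Fml m) (r : Fin m → Fin k)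
    (v : Fin k → ZFSet), SatM M (φ.rename r) v ↔ SatM M φ (v ∘ r)
  | _, _, .mem i j, r, v => Iff.rfl
  | _, _, .eq i j, r, v => Iff.rfl
  | _, _, .imp φ ψ, r, v => by
      simp only [Fml.rename, SatM]
      rw [satM_rename M φ r v, satM_rename M ψ r v]
  | _, _, .neg φ, r, v => by
      simp only [Fml.rename, SatM]
      rw [satM_rename M φ r v]
  | _, _, .all φ, r, v => by
      simp only [Fml.rename, SatM]
      refine forall_congr' fun x => forall_congr' fun hx => ?_
      rw [satM_rename M φ _ _]
      have : (Fin.cons x v) ∘ (fun i => Fin.cases 0 (fun j => (r j).succ) i)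
          = Fin.cons x (v ∘ r) := by
        funext i
        refine Fin.cases ?_ (fun j => ?_) i <;> simp [Function.comp]
      rw [this]

/-! ### Derived satisfaction lemmas -/

variable {M : ZFSet}

@[simp] lemma satM_and {n} {φ ψ : Fml n} {v} :
    SatM M (φ.and ψ) v ↔ SatM M φ v ∧ SatM M ψ v := by
  simp only [Fml.and, SatM]; tauto

@[simp] lemma satM_or {n} {φ ψ : Fml n} {v} :
    SatM M (φ.or ψ) v ↔ SatM M φ v ∨ SatM M ψ v := by
  simp only [Fml.or, SatM]; tauto

@[simp] lemma satM_iff {n} {φ ψ : Fml n} {v} :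
    SatM M (φ.iff ψ) v ↔ (SatM M φ v ↔ SatM M ψ v) := by
  simp only [Fml.iff, Fml.and, SatM]; tauto

@[simp] lemma satM_ex {n} {φ : Fml (n+1)} {v} :
    SatM M (φ.ex) v ↔ ∃ x, x ∈ M ∧ SatM M φ (Fin.cons x v) := by
  simp only [Fml.ex, SatM]
  constructor
  · intro h
    by_contra hc
    push_neg at hc
    exact h fun x hx hs => hc x hx hs
  · rintro ⟨x, hx, hs⟩ h
    exact h x hx hs

lemma satM_all {n} {φ : Fml (n+1)} {v} :
    SatM M (Fml.all φ) v ↔ ∀ x, x ∈ M → SatM M φ (Fin.cons x v) := Iff.rfl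

lemma satM_imp {n} {φ ψ : Fml n} {v} :
    SatM M (Fml.imp φ ψ) v ↔ (SatM M φ v → SatM M ψ v) := Iff.rfl

lemma satM_neg {n} {φ : Fml n} {v} :
    SatM M (Fml.neg φ) v ↔ ¬ SatM M φ v := Iff.rfl

lemma satM_mem {n} {i j : Fin n} {v} : SatM M (Fml.mem i j) v ↔ v i ∈ v j := Iff.rfl

lemma satM_eq {n} {i j : Fin n} {v} : SatM M (Fml.eq i j) v ↔ v i = v j := Iff.rfl

/-! ### Consequences of the axioms -/

variable (hM : IsTransModelZFC M)

section Axioms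
include hM

lemma transM {x y : ZFSet} (hx : x ∈ M) (hy : y ∈ x) : y ∈ M := hM.1 x hx hy

lemma subM {x : ZFSet} (hx : x ∈ M) : x ⊆ M := hM.1 x hx

/-- Separation: for any formula and parameters, the subset of `a ∈ M` it defines is in `M`. -/
lemma sepM {n : ℕ} (φ : Fml (n + 1)) (params : Fin n → ZFSet) (hp : ∀ i, params i ∈ M)
    {a : ZFSet} (ha : a ∈ M) :
    ∃ y ∈ M, ∀ x, x ∈ y ↔ x ∈ a ∧ SatM M φ (Fin.cons x params) := by
  have hsep := hM.2.2.2.2.2.2.2.2.1 n φ (Fin.cons a params)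
    (fun i => Fin.cases ha hp i)
  unfold axSep at hsep
  rw [satM_ex] at hsep
  obtain ⟨y, hy, hsat⟩ := hsep
  rw [satM_all] at hsat
  refine ⟨y, hy, fun x => ?_⟩
  constructor
  · intro hxy
    have hxM : x ∈ M := transM hM hy hxy
    have := (satM_iff.1 (hsat x hxM)).1 hxy
    rw [satM_and] at this
    obtain ⟨h1, h2⟩ := this
    rw [satM_mem] at h1
    rw [satM_rename] at h2
    refine ⟨h1, ?_⟩
    convert h2 using 2
    funext i
    refine Fin.cases rfl (fun j => rfl) i
  · rintro ⟨hxa, hs⟩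
    have hxM : x ∈ M := transM hM ha hxa
    refine (satM_iff.1 (hsat x hxM)).2 ?_
    rw [satM_and, satM_mem, satM_rename]
    refine ⟨hxa, ?_⟩
    convert hs using 2
    funext i
    refine Fin.cases rfl (fun j => rfl) i

/-- Pairing: `{x, y} ∈ M`. -/
lemma upairM {x y : ZFSet} (hx : x ∈ M) (hy : y ∈ M) : ({x, y} : ZFSet) ∈ M := by
  have hpair := hM.2.2.1 ![x, y] (fun i => by fin_cases i <;> assumption)
  unfold axPair at hpair
  rw [satM_ex] at hpair
  obtain ⟨z, hz, hsat⟩ := hpair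
  rw [satM_and, satM_mem, satM_mem] at hsat
  obtain ⟨h1, h2⟩ := hsat
  -- separate {t ∈ z : t = x ∨ t = y}
  obtain ⟨w, hw, hmem⟩ := sepM hM ((Fml.eq 0 1).or (Fml.eq 0 2)) ![x, y]
    (fun i => by fin_cases i <;> assumption) hz
  have : w = ({x, y} : ZFSet) := by
    apply ZFSet.ext
    intro t
    rw [hmem t, satM_or, satM_eq, satM_eq]
    show t ∈ z ∧ (t = x ∨ t = y) ↔ t ∈ ({x, y} : ZFSet)
    rw [ZFSet.mem_pair]
    constructor
    · exact fun h => h.2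
    · rintro (rfl | rfl)
      exacts [⟨h1, Or.inl rfl⟩, ⟨h2, Or.inr rfl⟩]
  rwa [this] at hw

lemma singM {x : ZFSet} (hx : x ∈ M) : ({x} : ZFSet) ∈ M := by
  have := upairM hM hx hx
  simpa using this

lemma kpairM {x y : ZFSet} (hx : x ∈ M) (hy : y ∈ M) : ZFSet.pair x y ∈ M := by
  exact upairM hM (singM hM hx) (upairM hM hx hy)

/-- Union of a set: a version producing `x ∪ y ∈ M`. -/
lemma unionM {x y : ZFSet} (hx : x ∈ M) (hy : y ∈ M) : x ∪ y ∈ M := by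
  have hun := hM.2.2.2.1 ![{x, y}] (fun i => by fin_cases i; exact upairM hM hx hy)
  unfold axUnion at hun
  rw [satM_ex] at hun
  obtain ⟨u, hu, hsat⟩ := hun
  rw [satM_all] at hsat
  have hsub : ∀ t, t ∈ x ∪ y → t ∈ u := by
    intro t ht
    rw [ZFSet.mem_union] at ht
    have htM : t ∈ M := by
      rcases ht with h | h
      exacts [transM hM hx h, transM hM hy h]
    rcases ht with h | h
    · have := hsat x hx
      rw [satM_all] at this
      have := this t htM
      rw [satM_imp, satM_and, satM_mem, satM_mem, satM_mem] at this
      exact this ⟨h, ZFSet.mem_pair.2 (Or.inl rfl)⟩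
    · have := hsat y hy
      rw [satM_all] at this
      have := this t htM
      rw [satM_imp, satM_and, satM_mem, satM_mem, satM_mem] at this
      exact this ⟨h, ZFSet.mem_pair.2 (Or.inr rfl)⟩
  obtain ⟨w, hw, hmem⟩ := sepM hM ((Fml.mem 0 1).or (Fml.mem 0 2)) ![x, y]
    (fun i => by fin_cases i <;> assumption) hu
  have : w = x ∪ y := by
    apply ZFSet.ext
    intro t
    rw [hmem t, satM_or, satM_mem, satM_mem]
    show t ∈ u ∧ (t ∈ x ∨ t ∈ y) ↔ t ∈ x ∪ y
    rw [ZFSet.mem_union]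
    exact ⟨fun h => h.2, fun h => ⟨hsub t (ZFSet.mem_union.2 h), h⟩⟩
  rwa [this] at hw

lemma insertM {x y : ZFSet} (hx : x ∈ M) (hy : y ∈ M) : insert x y ∈ M := by
  have : insert x y = {x} ∪ y := by
    apply ZFSet.ext; intro t
    simp [ZFSet.mem_insert_iff, ZFSet.mem_union]
  rw [this]
  exact unionM hM (singM hM hx) hy

lemma emptyM : (∅ : ZFSet) ∈ M := by
  obtain ⟨w, hw, hinf⟩ := satM_ex.1 (hM.2.2.2.2.2.1 ![] (fun i => i.elim0))
  rw [satM_and] at hinf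
  obtain ⟨e, he, hsat⟩ := satM_ex.1 hinf.1
  rw [satM_and, satM_mem, satM_all] at hsat
  have : e = ∅ := by
    apply ZFSet.ext; intro t
    simp only [ZFSet.notMem_empty, iff_false]
    intro ht
    exact (satM_neg.1 (hsat.2 t (transM hM he ht))) ht
  exact this ▸ he

/-- The infinity witness: a set `w ∈ M` containing all `natZF n`. -/
lemma infinityM : ∃ w ∈ M, ∀ n : ℕ, natZF n ∈ w := by
  obtain ⟨w, hw, hinf⟩ := satM_ex.1 (hM.2.2.2.2.2.1 ![] (fun i => i.elim0))
  rw [satM_and] at hinf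
  obtain ⟨hzero, hsucc⟩ := hinf
  obtain ⟨e, he, hsat⟩ := satM_ex.1 hzero
  rw [satM_and, satM_mem, satM_all] at hsat
  have he' : e = ∅ := by
    apply ZFSet.ext; intro t
    simp only [ZFSet.notMem_empty, iff_false]
    intro ht
    exact (satM_neg.1 (hsat.2 t (transM hM (transM hM hw hsat.1) ht))) ht
  refine ⟨w, hw, fun n => ?_⟩
  induction n with
  | zero => show (∅ : ZFSet) ∈ w; exact he' ▸ hsat.1
  | succ k ih =>
    rw [satM_all] at hsucc
    have := hsucc (natZF k) (transM hM hw ih)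
    rw [satM_imp] at this
    have := this ih
    obtain ⟨y, hyM, hy⟩ := satM_ex.1 this
    rw [satM_and, satM_mem, satM_and, satM_mem, satM_all] at hy
    obtain ⟨hyw, hky, hchar⟩ := hy
    have : y = natZF (k + 1) := by
      apply ZFSet.ext; intro t
      show t ∈ y ↔ t ∈ insert (natZF k) (natZF k)
      rw [ZFSet.mem_insert_iff]
      constructor
      · intro ht
        have := (satM_iff.1 (hchar t (transM hM hyM ht))).1 ht
        rw [satM_or, satM_mem, satM_eq] at this
        tauto
      · rintro (rfl | ht)
        · exact hky
        · refine (satM_iff.1 (hchar t (transM hM (transM hM hw ih) ht))).2 ?_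
          rw [satM_or, satM_mem, satM_eq]
          exact Or.inl ht
    exact this ▸ hyw

lemma natM (n : ℕ) : natZF n ∈ M := by
  obtain ⟨w, hw, h⟩ := infinityM hM
  exact transM hM hw (h n)

/-- Power set: a superset in `M` of all subsets-in-`M`. -/
lemma powM {x : ZFSet} (hx : x ∈ M) : ∃ P ∈ M, ∀ y ∈ M, y ⊆ x → y ∈ P := by
  have hp := hM.2.2.2.2.1 ![x] (fun i => by fin_cases i; exact hx)
  unfold axPower at hp
  obtain ⟨P, hP, hsat⟩ := satM_ex.1 hp
  rw [satM_all] at hsat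
  refine ⟨P, hP, fun y hy hsub => ?_⟩
  have := hsat y hy
  rw [satM_imp, satM_mem] at this
  refine this ?_
  rw [satM_all]
  intro t htM
  rw [satM_imp, satM_mem, satM_mem]
  exact fun h => hsub h

/-- Choice: a selector for a family of nonempty pairwise disjoint sets. -/
lemma choiceM {F : ZFSet} (hF : F ∈ M)
    (hne : ∀ y, y ∈ F → ∃ t, t ∈ y)
    (hdisj : ∀ y, y ∈ F → ∀ y', y' ∈ F → y ≠ y' → ∀ t, t ∈ y → t ∉ y') :
    ∃ c ∈ M, ∀ y, y ∈ F → ∃ t, t ∈ c ∧ t ∈ y ∧ ∀ s, s ∈ c → s ∈ y → s = t := by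
  have hch := hM.2.2.2.2.2.2.2.1 ![F] (fun i => by fin_cases i; exact hF)
  unfold axChoice at hch
  rw [satM_imp] at hch
  have hc := hch (by
    rw [satM_and]
    constructor
    · rw [satM_all]
      intro y hy
      rw [satM_imp, satM_mem]
      intro hyF
      rw [satM_ex]
      obtain ⟨t, ht⟩ := hne y hyF
      exact ⟨t, transM hM (transM hM hF hyF) ht, ht⟩
    · rw [satM_all]
      intro y hy
      rw [satM_imp, satM_mem]
      intro hyF
      rw [satM_all]
      intro y' hy'
      rw [satM_imp, satM_mem]
      intro hy'F
      rw [satM_imp, satM_neg, satM_eq, satM_neg, satM_ex]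
      intro hne'
      rintro ⟨t, htM, hts⟩
      rw [satM_and, satM_mem, satM_mem] at hts
      exact hdisj y hyF y' hy'F (fun h => hne' h) t hts.1 hts.2)
  obtain ⟨c, hcM, hsat⟩ := satM_ex.1 hc
  rw [satM_all] at hsat
  refine ⟨c, hcM, fun y hyF => ?_⟩
  have hyM : y ∈ M := transM hM hF hyF
  have := hsat y hyM
  rw [satM_imp, satM_mem] at this
  obtain ⟨t, htM, hts⟩ := satM_ex.1 (this hyF)
  rw [satM_and, satM_mem, satM_and, satM_mem, satM_all] at hts
  obtain ⟨hty, htc, huniq⟩ := hts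
  refine ⟨t, htc, hty, fun s hsc hsy => ?_⟩
  have hsM : s ∈ M := transM hM hcM hsc
  have := huniq s hsM
  rw [satM_imp, satM_and, satM_mem, satM_mem, satM_eq] at this
  exact this ⟨hsy, hsc⟩

end Axioms

end HechlerAux
namespace HechlerAux

open ZFSet

/-! ### Formula library -/

/-- `v 0 ⊆ v 1` -/
def subF : Fml 2 := .all (.imp (.mem 0 1) (.mem 0 2))

/-- `v 0 = ∅` -/
def emptyF : Fml 1 := .all (.neg (.mem 0 1))

/-- `v 1 = {v 0}` -/
def singF : Fml 2 := .and (.mem 0 1) (.all (.imp (.mem 0 2) (.eq 0 1)))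

/-- `v 2 = {v 0, v 1}` -/
def upairF : Fml 3 :=
  .and (.mem 0 2) (.and (.mem 1 2) (.all (.imp (.mem 0 3) ((Fml.eq 0 1).or (.eq 0 2)))))

/-- `v 2 = pair (v 0) (v 1)` (Kuratowski) -/
def kpairF : Fml 3 :=
  .ex (.ex ((Fml.and (singF.rename ![2, 1])
    ((upairF.rename ![2, 3, 0]).and (upairF.rename ![1, 0, 4])))))

/-- `pair (v 0) (v 1) ∈ v 2` -/
def pairMemF : Fml 3 := .ex ((kpairF.rename ![1, 2, 0]).and (.mem 0 3))

/-- `v 1 = insert (v 0) (v 0)` -/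
def succEqF : Fml 2 :=
  .and (.mem 0 1) (.and (.all (.imp (.mem 0 2) ((Fml.mem 0 1).or (.eq 0 1))))
    (subF.rename ![0, 1]))

/-- `v 0` is transitive -/
def transF : Fml 1 := .all (.imp (.mem 0 1) (subF.rename ![0, 1]))

/-- `v 0` is a von Neumann natural -/
def natF : Fml 1 :=
  .and transF (.and
    (.all (.imp (.mem 0 1) ((emptyF.rename ![0]).or
      (.ex ((Fml.mem 0 1).and (succEqF.rename ![0, 1]))))))
    ((emptyF.rename ![0]).or (.ex ((Fml.mem 0 1).and (succEqF.rename ![0, 1])))))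

/-- `v 1` codes the max of `g (v 0)` over `g` in the finite set coded by `v 2`. -/
def maxIsF : Fml 3 :=
  .and (.all (.imp (.mem 0 3) (.ex ((pairMemF.rename ![2, 0, 1]).and (subF.rename ![0, 3])))))
       ((emptyF.rename ![1]).or (.ex ((Fml.mem 0 3).and (pairMemF.rename ![1, 2, 0]))))

/-- `v 1` codes the body at `v 0` of the Hechler condition coded by `v 2`. -/
def bodyIsF : Fml 3 :=
  .ex (.ex ((kpairF.rename ![1, 0, 4]).and
    ((pairMemF.rename ![2, 3, 1]).or
      ((Fml.all (.neg (pairMemF.rename ![3, 0, 2]))).and (maxIsF.rename ![2, 3, 0])))))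

variable {M : ZFSet} (hM : IsTransModelZFC M)

section Formulas
include hM

lemma sat_subF {v : Fin 2 → ZFSet} (h0 : v 0 ∈ M) :
    SatM M subF v ↔ v 0 ⊆ v 1 := by
  unfold subF
  rw [satM_all]
  constructor
  · intro h t ht
    have := h t (transM hM h0 ht)
    rw [satM_imp, satM_mem, satM_mem] at this
    exact this ht
  · intro h t htM
    rw [satM_imp, satM_mem, satM_mem]
    exact fun ht => h ht

lemma sat_emptyF {v : Fin 1 → ZFSet} (h0 : v 0 ∈ M) :
    SatM M emptyF v ↔ v 0 = ∅ := by
  unfold emptyF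
  rw [satM_all]
  constructor
  · intro h
    apply ZFSet.ext
    intro t
    simp only [ZFSet.notMem_empty, iff_false]
    intro ht
    exact (satM_neg.1 (h t (transM hM h0 ht))) ht
  · intro h t htM
    rw [satM_neg, satM_mem]
    show t ∉ v 0
    rw [h]
    exact ZFSet.notMem_empty t

lemma sat_singF {v : Fin 2 → ZFSet} (h1 : v 1 ∈ M) :
    SatM M singF v ↔ v 1 = ({v 0} : ZFSet) := by
  unfold singF
  rw [satM_and, satM_mem, satM_all]
  constructor
  · rintro ⟨ha, hb⟩
    apply ZFSet.ext
    intro t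
    rw [ZFSet.mem_singleton]
    constructor
    · intro ht
      have := hb t (transM hM h1 ht)
      rw [satM_imp, satM_mem, satM_eq] at this
      exact this ht
    · rintro rfl; exact ha
  · intro h
    constructor
    · show v 0 ∈ v 1
      rw [h]; exact ZFSet.mem_singleton.2 rfl
    · intro t htM
      rw [satM_imp, satM_mem, satM_eq]
      show t ∈ v 1 → t = v 0
      rw [h]
      exact fun ht => ZFSet.mem_singleton.1 ht

lemma sat_upairF {v : Fin 3 → ZFSet} (h2 : v 2 ∈ M) :
    SatM M upairF v ↔ v 2 = ({v 0, v 1} : ZFSet) := by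
  unfold upairF
  rw [satM_and, satM_mem, satM_and, satM_mem, satM_all]
  constructor
  · rintro ⟨ha, hb, hc⟩
    apply ZFSet.ext
    intro t
    rw [ZFSet.mem_pair]
    constructor
    · intro ht
      have := hc t (transM hM h2 ht)
      rw [satM_imp, satM_mem, satM_or, satM_eq, satM_eq] at this
      exact this ht
    · rintro (rfl | rfl)
      exacts [ha, hb]
  · intro h
    refine ⟨?_, ?_, fun t htM => ?_⟩
    · show v 0 ∈ v 2; rw [h]; exact ZFSet.mem_pair.2 (Or.inl rfl)
    · show v 1 ∈ v 2; rw [h]; exact ZFSet.mem_pair.2 (Or.inr rfl)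
    · rw [satM_imp, satM_mem, satM_or, satM_eq, satM_eq]
      show t ∈ v 2 → t = v 0 ∨ t = v 1
      rw [h]
      exact fun ht => ZFSet.mem_pair.1 ht

lemma sat_kpairF {v : Fin 3 → ZFSet} (h0 : v 0 ∈ M) (h1 : v 1 ∈ M) (h2 : v 2 ∈ M) :
    SatM M kpairF v ↔ v 2 = ZFSet.pair (v 0) (v 1) := by
  unfold kpairF
  rw [satM_ex]
  constructor
  · rintro ⟨s, hsM, hs⟩
    rw [satM_ex] at hs
    obtain ⟨t, htM, ht⟩ := hs
    rw [satM_and, satM_and, satM_rename, satM_rename, satM_rename] at ht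
    obtain ⟨ha, hb, hc⟩ := ht
    have e1 : s = ({v 0} : ZFSet) := (sat_singF hM (by exact hsM)).1 ha
    have e2 : t = ({v 0, v 1} : ZFSet) := (sat_upairF hM (by exact htM)).1 hb
    have e3 : v 2 = ({s, t} : ZFSet) := (sat_upairF hM (by exact h2)).1 hc
    rw [e3, e1, e2]; rfl
  · intro h
    refine ⟨{v 0}, singM hM h0, ?_⟩
    rw [satM_ex]
    refine ⟨{v 0, v 1}, upairM hM h0 h1, ?_⟩
    rw [satM_and, satM_and, satM_rename, satM_rename, satM_rename]
    refine ⟨(sat_singF hM (by exact singM hM h0)).2 rfl,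
      (sat_upairF hM (by exact upairM hM h0 h1)).2 rfl,
      (sat_upairF hM (by exact h2)).2 (by exact h)⟩

lemma sat_pairMemF {v : Fin 3 → ZFSet} (h0 : v 0 ∈ M) (h1 : v 1 ∈ M) (h2 : v 2 ∈ M) :
    SatM M pairMemF v ↔ ZFSet.pair (v 0) (v 1) ∈ v 2 := by
  unfold pairMemF
  rw [satM_ex]
  constructor
  · rintro ⟨w, hwM, hw⟩
    rw [satM_and, satM_rename, satM_mem] at hw
    obtain ⟨ha, hb⟩ := hw
    have := (sat_kpairF hM (by exact h0) (by exact h1) (by exact hwM)).1 ha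
    have e : w = ZFSet.pair (v 0) (v 1) := this
    exact e ▸ hb
  · intro h
    refine ⟨ZFSet.pair (v 0) (v 1), transM hM h2 h, ?_⟩
    rw [satM_and, satM_rename, satM_mem]
    exact ⟨(sat_kpairF hM (by exact h0) (by exact h1)
      (by exact transM hM h2 h)).2 rfl, h⟩

lemma sat_succEqF {v : Fin 2 → ZFSet} (h0 : v 0 ∈ M) (h1 : v 1 ∈ M) :
    SatM M succEqF v ↔ v 1 = insert (v 0) (v 0) := by
  unfold succEqF
  rw [satM_and, satM_mem, satM_and, satM_all, satM_rename]
  constructor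
  · rintro ⟨ha, hb, hc⟩
    have hsub : v 0 ⊆ v 1 := (sat_subF hM (by exact h0)).1 hc
    apply ZFSet.ext
    intro t
    rw [ZFSet.mem_insert_iff]
    constructor
    · intro ht
      have := hb t (transM hM h1 ht)
      rw [satM_imp, satM_mem, satM_or, satM_mem, satM_eq] at this
      rcases this ht with h | h
      exacts [Or.inr h, Or.inl h]
    · rintro (rfl | ht)
      exacts [ha, hsub ht]
  · intro h
    refine ⟨?_, fun t htM => ?_, (sat_subF hM (by exact h0)).2 ?_⟩
    · show v 0 ∈ v 1; rw [h]; exact ZFSet.mem_insert _ _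
    · rw [satM_imp, satM_mem, satM_or, satM_mem, satM_eq]
      show t ∈ v 1 → t ∈ v 0 ∨ t = v 0
      rw [h]
      intro ht
      rcases ZFSet.mem_insert_iff.1 ht with hh | hh
      exacts [Or.inr hh, Or.inl hh]
    · show v 0 ⊆ v 1
      rw [h]
      exact fun t ht => ZFSet.mem_insert_of_mem _ ht

lemma sat_transF {v : Fin 1 → ZFSet} (h0 : v 0 ∈ M) :
    SatM M transF v ↔ (v 0).IsTransitive := by
  unfold transF
  rw [satM_all]
  constructor
  · intro h y hy
    have := h y (transM hM h0 hy)
    rw [satM_imp, satM_rename, satM_mem] at this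
    exact (sat_subF hM (by exact transM hM h0 hy)).1 (this hy)
  · intro h y hyM
    rw [satM_imp, satM_rename, satM_mem]
    intro hy
    exact (sat_subF hM (by exact transM hM h0 hy)).2 (by exact h y hy)

end Formulas

omit hM in
lemma natZF_isTransitive (n : ℕ) : (natZF n).IsTransitive := by
  intro y hy
  obtain ⟨m, hm, rfl⟩ := mem_natZF.1 hy
  exact natZF_subset_of_le (by omega)

/-- The structural characterization of the von Neumann naturals. -/
def GoodSet (x : ZFSet) : Prop :=
  x.IsTransitive ∧ (∀ y, y ∈ x → y = ∅ ∨ ∃ z, z ∈ y ∧ y = insert z z) ∧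
    (x = ∅ ∨ ∃ z, z ∈ x ∧ x = insert z z)

lemma goodSet_natZF (n : ℕ) : GoodSet (natZF n) := by
  refine ⟨natZF_isTransitive n, fun y hy => ?_, ?_⟩
  · obtain ⟨m, hm, rfl⟩ := mem_natZF.1 hy
    cases m with
    | zero => exact Or.inl rfl
    | succ k => exact Or.inr ⟨natZF k, natZF_mem_of_lt (by omega), rfl⟩
  · cases n with
    | zero => exact Or.inl rfl
    | succ k => exact Or.inr ⟨natZF k, natZF_mem_of_lt (by omega), rfl⟩

lemma goodSet_iff_natZF {x : ZFSet} : GoodSet x ↔ ∃ n, x = natZF n := by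
  constructor
  · intro hx
    induction x using ZFSet.inductionOn with
    | _ x ih =>
      obtain ⟨htr, hsucc, hx3⟩ := hx
      rcases hx3 with rfl | ⟨z, hzx, hxz⟩
      · exact ⟨0, rfl⟩
      · have hzgood : GoodSet z := by
          refine ⟨?_, fun y hy => hsucc y (htr z hzx hy), ?_⟩
          · intro s hs t ht
            have hsx : s ∈ x := htr z hzx hs
            have htx : t ∈ x := htr s hsx ht
            rw [hxz, ZFSet.mem_insert_iff] at htx
            rcases htx with rfl | h
            · exact absurd hs (ZFSet.mem_asymm ht)
            · exact h
          · exact hsucc z hzx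
        obtain ⟨n, rfl⟩ := ih z hzx hzgood
        exact ⟨n + 1, by rw [hxz]; rfl⟩
  · rintro ⟨n, rfl⟩
    exact goodSet_natZF n

section Formulas2
include hM

lemma sat_natF {v : Fin 1 → ZFSet} (h0 : v 0 ∈ M) :
    SatM M natF v ↔ ∃ n : ℕ, v 0 = natZF n := by
  rw [← goodSet_iff_natZF]
  unfold natF
  rw [satM_and, satM_and, sat_transF hM h0, satM_all, satM_or, satM_rename, satM_ex]
  have hdisj : ∀ (w : Fin 2 → ZFSet), w 0 ∈ M → w 1 ∈ M →
      (SatM M ((emptyF.rename ![0]).or (((Fml.mem 0 1)).and (succEqF.rename ![0, 1])).ex) w ↔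
        (w 0 = ∅ ∨ ∃ z, z ∈ w 0 ∧ w 0 = insert z z)) := by
    intro w hw0 hw1
    rw [satM_or, satM_rename, satM_ex]
    constructor
    · rintro (h | ⟨z, hzM, hz⟩)
      · exact Or.inl ((sat_emptyF hM (by exact hw0)).1 h)
      · rw [satM_and, satM_mem, satM_rename] at hz
        refine Or.inr ⟨z, hz.1, ?_⟩
        exact (sat_succEqF hM (by exact hzM) (by exact hw0)).1 hz.2
    · rintro (h | ⟨z, hzy, hzsucc⟩)
      · exact Or.inl ((sat_emptyF hM (by exact hw0)).2 (by exact h))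
      · have hzM : z ∈ M := transM hM hw0 hzy
        refine Or.inr ⟨z, hzM, ?_⟩
        rw [satM_and, satM_mem, satM_rename]
        exact ⟨hzy, (sat_succEqF hM (by exact hzM) (by exact hw0)).2 (by exact hzsucc)⟩
  constructor
  · rintro ⟨h1, h2, h3⟩
    refine ⟨h1, fun y hy => ?_, ?_⟩
    · have hyM : y ∈ M := transM hM h0 hy
      have := h2 y hyM
      rw [satM_imp, satM_mem] at this
      exact (hdisj (Fin.cons y v) (by exact hyM) (by exact h0)).1 (this hy)
    · rcases h3 with h | ⟨z, hzM, hz⟩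
      · exact Or.inl ((sat_emptyF hM (by exact h0)).1 h)
      · rw [satM_and, satM_mem, satM_rename] at hz
        exact Or.inr ⟨z, hz.1, (sat_succEqF hM (by exact hzM) (by exact h0)).1 hz.2⟩
  · rintro ⟨h1, h2, h3⟩
    refine ⟨h1, fun y hyM => ?_, ?_⟩
    · rw [satM_imp, satM_mem]
      intro hy
      exact (hdisj (Fin.cons y v) (by exact hyM) (by exact h0)).2 (h2 y hy)
    · rcases h3 with h | ⟨z, hzx, hzsucc⟩
      · exact Or.inl ((sat_emptyF hM (by exact h0)).2 (by exact h))
      · have hzM : z ∈ M := transM hM h0 hzx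
        refine Or.inr ⟨z, hzM, ?_⟩
        rw [satM_and, satM_mem, satM_rename]
        exact ⟨hzx, (sat_succEqF hM (by exact hzM) (by exact h0)).2 (by exact hzsucc)⟩

end Formulas2

end HechlerAux
namespace HechlerAux

open ZFSet

variable {M : ZFSet} (hM : IsTransModelZFC M)

omit hM in
lemma mem_pair_left (x y : ZFSet) : ({x} : ZFSet) ∈ ZFSet.pair x y := by
  simp [ZFSet.pair, ZFSet.mem_pair]

omit hM in
lemma mem_pair_right (x y : ZFSet) : ({x, y} : ZFSet) ∈ ZFSet.pair x y := by
  simp [ZFSet.pair, ZFSet.mem_pair]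

section Formulas3
include hM

lemma kpair_mem_components {x y : ZFSet} (h : ZFSet.pair x y ∈ M) : x ∈ M ∧ y ∈ M := by
  have h1 : ({x} : ZFSet) ∈ M := transM hM h (mem_pair_left x y)
  have h2 : ({x, y} : ZFSet) ∈ M := transM hM h (mem_pair_right x y)
  exact ⟨transM hM h1 (ZFSet.mem_singleton.2 rfl),
    transM hM h2 (ZFSet.mem_pair.2 (Or.inr rfl))⟩

lemma sat_maxIsF {v : Fin 3 → ZFSet} {m : ℕ} {A : Finset (ℕ → ℕ)}
    (e0 : v 0 = natZF m) (h1 : v 1 ∈ M) (e2 : v 2 = finsetFunZF A)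
    (h2 : v 2 ∈ M) :
    SatM M maxIsF v ↔ v 1 = natZF (A.sup fun g => g m) := by
  unfold maxIsF
  rw [satM_and, satM_all, satM_or, satM_rename, satM_ex]
  have hmemA : ∀ g ∈ A, funZF g ∈ v 2 := by
    intro g hg; rw [e2]; exact mem_finsetFunZF.2 ⟨g, hg, rfl⟩
  constructor
  · rintro ⟨hbound, hatt⟩
    have hboundR : ∀ g ∈ A, natZF (g m) ⊆ v 1 := by
      intro g hg
      have hgM : funZF g ∈ M := transM hM h2 (hmemA g hg)
      have hb := hbound (funZF g) hgM
      rw [satM_imp, satM_mem] at hb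
      obtain ⟨u, huM, hu⟩ := satM_ex.1 (hb (hmemA g hg))
      rw [satM_and, satM_rename, satM_rename] at hu
      obtain ⟨hu1, hu2⟩ := hu
      have hpm : ZFSet.pair (v 0) u ∈ funZF g :=
        (sat_pairMemF hM (v := Fin.cons u (Fin.cons (funZF g) v) ∘ ![2, 0, 1])
          (by show v 0 ∈ M; rw [e0]; exact natM hM m)
          (by exact huM) (by exact hgM)).1 hu1
      rw [e0, pair_mem_funZF] at hpm
      have hsub : u ⊆ v 1 :=
        (sat_subF hM (v := Fin.cons u (Fin.cons (funZF g) v) ∘ ![0, 3])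
          (by exact huM)).1 hu2
      rwa [hpm] at hsub
    rcases hatt with h | ⟨g, hgM, hg⟩
    · have hve : v 1 = ∅ :=
        (sat_emptyF hM (v := v ∘ ![1]) (by exact h1)).1 h
      have hz : (A.sup fun g => g m) = 0 := by
        refine Nat.le_zero.1 (Finset.sup_le fun g hg => ?_)
        have hsg := hboundR g hg
        rw [hve] at hsg
        exact natZF_subset_iff.1 (show natZF (g m) ⊆ natZF 0 from hsg)
      rw [hve, hz]; rfl
    · rw [satM_and, satM_mem, satM_rename] at hg
      obtain ⟨hgmem, hpm⟩ := hg
      have hgmem' : g ∈ finsetFunZF A := by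
        have hx : g ∈ v 2 := hgmem
        rwa [e2] at hx
      obtain ⟨g0, hg0, rfl⟩ := mem_finsetFunZF.1 hgmem'
      have hpm' : ZFSet.pair (v 0) (v 1) ∈ funZF g0 :=
        (sat_pairMemF hM (v := Fin.cons (funZF g0) v ∘ ![1, 2, 0])
          (by show v 0 ∈ M; rw [e0]; exact natM hM m)
          (by exact h1) (by exact hgM)).1 hpm
      rw [e0, pair_mem_funZF] at hpm'
      have hle : A.sup (fun g => g m) ≤ g0 m := by
        refine Finset.sup_le fun g hg => ?_
        have hsg := hboundR g hg
        rw [hpm'] at hsg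
        exact natZF_subset_iff.1 hsg
      have heq := le_antisymm hle (Finset.le_sup (f := fun g => g m) hg0)
      rw [hpm', heq]
  · intro h
    constructor
    · intro g hgM
      rw [satM_imp, satM_mem]
      intro hgmem
      have hgmem' : g ∈ finsetFunZF A := by
        have hx : g ∈ v 2 := hgmem
        rwa [e2] at hx
      obtain ⟨g0, hg0, rfl⟩ := mem_finsetFunZF.1 hgmem'
      rw [satM_ex]
      refine ⟨natZF (g0 m), natM hM _, ?_⟩
      rw [satM_and, satM_rename, satM_rename]
      constructor
      · refine (sat_pairMemF hM
          (v := Fin.cons (natZF (g0 m)) (Fin.cons (funZF g0) v) ∘ ![2, 0, 1])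
          (by show v 0 ∈ M; rw [e0]; exact natM hM m)
          (by exact natM hM (g0 m)) (by exact hgM)).2 ?_
        show ZFSet.pair (v 0) (natZF (g0 m)) ∈ funZF g0
        rw [e0]
        exact pair_mem_funZF.2 rfl
      · refine (sat_subF hM
          (v := Fin.cons (natZF (g0 m)) (Fin.cons (funZF g0) v) ∘ ![0, 3])
          (by exact natM hM (g0 m))).2 ?_
        show natZF (g0 m) ⊆ v 1
        rw [h]
        exact natZF_subset_of_le (Finset.le_sup (f := fun g => g m) hg0)
    · rcases A.eq_empty_or_nonempty with rfl | hne
      · refine Or.inl ((sat_emptyF hM (v := v ∘ ![1]) (by exact h1)).2 ?_)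
        show v 1 = ∅
        rw [h]; rfl
      · obtain ⟨g0, hg0, hsup⟩ := Finset.exists_mem_eq_sup A hne fun g => g m
        have hgM : funZF g0 ∈ M := transM hM h2 (hmemA g0 hg0)
        refine Or.inr ⟨funZF g0, hgM, ?_⟩
        rw [satM_and, satM_mem, satM_rename]
        refine ⟨hmemA g0 hg0, ?_⟩
        refine (sat_pairMemF hM (v := Fin.cons (funZF g0) v ∘ ![1, 2, 0])
          (by show v 0 ∈ M; rw [e0]; exact natM hM m)
          (by exact h1) (by exact hgM)).2 ?_
        show ZFSet.pair (v 0) (v 1) ∈ funZF g0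
        rw [e0, h, hsup]
        exact pair_mem_funZF.2 rfl

lemma sat_bodyIsF {v : Fin 3 → ZFSet} {m : ℕ} {q : HechlerCond}
    (e0 : v 0 = natZF m) (h1 : v 1 ∈ M) (e2 : v 2 = hechlerCondZF q) (h2 : v 2 ∈ M) :
    SatM M bodyIsF v ↔ v 1 = natZF (hechlerBody q m) := by
  have hpairM : ZFSet.pair (listZF q.1) (finsetFunZF q.2) ∈ M := by
    have hx : v 2 ∈ M := h2
    rw [e2] at hx
    exact hx
  have hsM : listZF q.1 ∈ M := (kpair_mem_components hM hpairM).1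
  have hSM : finsetFunZF q.2 ∈ M := (kpair_mem_components hM hpairM).2
  unfold bodyIsF
  rw [satM_ex]
  constructor
  · rintro ⟨s, hsM', hs⟩
    rw [satM_ex] at hs
    obtain ⟨S, hSM', hS⟩ := hs
    rw [satM_and, satM_rename] at hS
    obtain ⟨hkp, hbody⟩ := hS
    have hQ : v 2 = ZFSet.pair s S :=
      (sat_kpairF hM (v := Fin.cons S (Fin.cons s v) ∘ ![1, 0, 4])
        (by exact hsM') (by exact hSM') (by exact h2)).1 hkp
    rw [e2] at hQ
    obtain ⟨es, eS⟩ := ZFSet.pair_injective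
      (show ZFSet.pair (listZF q.1) (finsetFunZF q.2) = ZFSet.pair s S from hQ)
    rw [satM_or, satM_rename] at hbody
    rcases hbody with hstem | hside
    · have hpm : ZFSet.pair (v 0) (v 1) ∈ s :=
        (sat_pairMemF hM (v := Fin.cons S (Fin.cons s v) ∘ ![2, 3, 1])
          (by show v 0 ∈ M; rw [e0]; exact natM hM m)
          (by exact h1) (by exact hsM')).1 hstem
      rw [← es, e0, pair_mem_listZF] at hpm
      rw [hpm.2, self_getD_body hpm.1]
    · rw [satM_and, satM_all, satM_rename] at hside
      obtain ⟨hnoval, hmax⟩ := hside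
      have hlen : ¬ m < q.1.length := by
        intro hlt
        have hbad := hnoval (natZF (q.1.getD m 0)) (natM hM _)
        rw [satM_neg, satM_rename] at hbad
        refine hbad ?_
        refine (sat_pairMemF hM
          (v := Fin.cons (natZF (q.1.getD m 0)) (Fin.cons S (Fin.cons s v)) ∘ ![3, 0, 2])
          (by show v 0 ∈ M; rw [e0]; exact natM hM m)
          (by exact natM hM _) (by exact hsM')).2 ?_
        show ZFSet.pair (v 0) (natZF (q.1.getD m 0)) ∈ s
        rw [← es, e0]
        exact pair_mem_listZF.2 ⟨hlt, rfl⟩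
      have hmx : v 1 = natZF (q.2.sup fun g => g m) :=
        (sat_maxIsF hM (v := Fin.cons S (Fin.cons s v) ∘ ![2, 3, 0])
          (by show v 0 = natZF m; exact e0)
          (by exact h1)
          (by show S = finsetFunZF q.2; exact eS.symm)
          (by exact hSM')).1 hmax
      rw [hmx, hechlerBody, if_neg hlen]
  · intro h
    refine ⟨listZF q.1, hsM, ?_⟩
    rw [satM_ex]
    refine ⟨finsetFunZF q.2, hSM, ?_⟩
    rw [satM_and, satM_rename]
    constructor
    · refine (sat_kpairF hM
        (v := Fin.cons (finsetFunZF q.2) (Fin.cons (listZF q.1) v) ∘ ![1, 0, 4])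
        (by exact hsM) (by exact hSM) (by exact h2)).2 ?_
      show v 2 = ZFSet.pair (listZF q.1) (finsetFunZF q.2)
      rw [e2]; rfl
    · rw [satM_or, satM_rename]
      by_cases hlt : m < q.1.length
      · refine Or.inl ?_
        refine (sat_pairMemF hM
          (v := Fin.cons (finsetFunZF q.2) (Fin.cons (listZF q.1) v) ∘ ![2, 3, 1])
          (by show v 0 ∈ M; rw [e0]; exact natM hM m)
          (by exact h1) (by exact hsM)).2 ?_
        show ZFSet.pair (v 0) (v 1) ∈ listZF q.1
        rw [e0, h, hechlerBody, if_pos hlt]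
        exact pair_mem_listZF.2 ⟨hlt, rfl⟩
      · refine Or.inr ?_
        rw [satM_and, satM_all]
        constructor
        · intro u huM
          rw [satM_neg, satM_rename]
          intro hpm
          have hpm' : ZFSet.pair (v 0) u ∈ listZF q.1 :=
            (sat_pairMemF hM
              (v := Fin.cons u (Fin.cons (finsetFunZF q.2) (Fin.cons (listZF q.1) v)) ∘ ![3, 0, 2])
              (by show v 0 ∈ M; rw [e0]; exact natM hM m)
              (by exact huM) (by exact hsM)).1 hpm
          rw [e0, pair_mem_listZF] at hpm'
          exact hlt hpm'.1
        · rw [satM_rename]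
          refine (sat_maxIsF hM
            (v := Fin.cons (finsetFunZF q.2) (Fin.cons (listZF q.1) v) ∘ ![2, 3, 0])
            (by show v 0 = natZF m; exact e0)
            (by exact h1)
            (by show finsetFunZF q.2 = finsetFunZF q.2; rfl)
            (by exact hSM)).2 ?_
          show v 1 = natZF (q.2.sup fun g => g m)
          rw [h, hechlerBody, if_neg hlt]

end Formulas3

end HechlerAux
namespace HechlerAux

open ZFSet

lemma funZF_injective {g g' : ℕ → ℕ} (h : funZF g = funZF g') : g = g' := by
  funext n
  have : ZFSet.pair (natZF n) (natZF (g n)) ∈ funZF g' := by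
    rw [← h]; exact mem_funZF.2 ⟨n, rfl⟩
  rw [pair_mem_funZF] at this
  exact natZF_inj this

lemma finsetFunZF_subset {A B : Finset (ℕ → ℕ)} (h : finsetFunZF A ⊆ finsetFunZF B) :
    A ⊆ B := by
  intro g hg
  have := h (mem_finsetFunZF.2 ⟨g, hg, rfl⟩)
  obtain ⟨g', hg', he⟩ := mem_finsetFunZF.1 this
  rwa [funZF_injective he]

/-- `hechlerLe (coded by v 1) (extCond p (v 0))` where `v 2, v 3, v 4` code
the stem of `p`, the side set of `p`, and the stem length of `p`. -/
def leCodeF : Fml 5 :=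
  .ex (.ex (
    (kpairF.rename ![1, 0, 3]).and (
    (subF.rename ![5, 0]).and (
    (subF.rename ![4, 1]).and (
    (Fml.all (.imp (.mem 0 3) (.imp (.neg (.mem 0 7))
      (.ex ((pairMemF.rename ![1, 0, 3]).and (maxIsF.rename ![1, 0, 7])))))).and
    (Fml.all (.imp (.mem 0 2)
      (.all (.all (.imp (kpairF.rename ![1, 0, 2])
        (.imp (.neg (.mem 1 5))
        (.imp (.neg (.mem 1 9))
          (.all (.imp (.mem 0 9)
            (.ex ((pairMemF.rename ![3, 0, 1]).and (subF.rename ![0, 2])))))))))))))))))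

variable {M : ZFSet} (hM : IsTransModelZFC M)

section LeCode
include hM

set_option maxHeartbeats 1000000 in
lemma sat_leCodeF {v : Fin 5 → ZFSet} {N : ℕ} {q p : HechlerCond}
    (e0 : v 0 = natZF N) (e1 : v 1 = hechlerCondZF q) (h1 : v 1 ∈ M)
    (e2 : v 2 = listZF p.1) (h2v : v 2 ∈ M) (e3 : v 3 = finsetFunZF p.2) (h3 : v 3 ∈ M)
    (e4 : v 4 = natZF p.1.length) :
    SatM M leCodeF v ↔ hechlerLe q (extCond p N) := by
  have hpairM : ZFSet.pair (listZF q.1) (finsetFunZF q.2) ∈ M := by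
    have hx : v 1 ∈ M := h1
    rw [e1] at hx; exact hx
  have hsM : listZF q.1 ∈ M := (kpair_mem_components hM hpairM).1
  have hSM : finsetFunZF q.2 ∈ M := (kpair_mem_components hM hpairM).2
  unfold leCodeF
  rw [satM_ex]
  constructor
  · rintro ⟨s, hsM', hs⟩
    rw [satM_ex] at hs
    obtain ⟨S, hSM', hS⟩ := hs
    rw [satM_and, satM_rename, satM_and, satM_rename, satM_and, satM_rename,
      satM_and] at hS
    obtain ⟨hkp, hAS, has, hC4, hC5⟩ := hS
    have hQ : v 1 = ZFSet.pair s S :=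
      (sat_kpairF hM (v := Fin.cons S (Fin.cons s v) ∘ ![1, 0, 3])
        (by exact hsM') (by exact hSM') (by exact h1)).1 hkp
    rw [e1] at hQ
    obtain ⟨es, eS⟩ := ZFSet.pair_injective
      (show ZFSet.pair (listZF q.1) (finsetFunZF q.2) = ZFSet.pair s S from hQ)
    -- side sets
    have hside : p.2 ⊆ q.2 := by
      apply finsetFunZF_subset
      have := (sat_subF hM (v := Fin.cons S (Fin.cons s v) ∘ ![5, 0])
        (by show v 3 ∈ M; exact h3)).1 hAS
      have h' : v 3 ⊆ S := this
      rw [e3, ← eS] at h'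
      exact h'
    -- a subset s
    have hasub : listZF p.1 ⊆ listZF q.1 := by
      have := (sat_subF hM (v := Fin.cons S (Fin.cons s v) ∘ ![4, 1])
        (by show v 2 ∈ M; exact h2v)).1 has
      have h' : v 2 ⊆ s := this
      rw [e2, ← es] at h'
      exact h'
    rw [satM_all] at hC4
    -- C4 gives the extended stem values
    have hC4' : ∀ i : ℕ, p.1.length ≤ i → i < N →
        ZFSet.pair (natZF i) (natZF (hechlerBody p i)) ∈ listZF q.1 := by
      intro i hiL hiN
      have hiM : natZF i ∈ M := natM hM i
      have := hC4 (natZF i) hiM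
      rw [satM_imp, satM_mem, satM_imp, satM_neg, satM_mem] at this
      have hmem : natZF i ∈ v 0 := by rw [e0]; exact natZF_mem_of_lt hiN
      have hnmem : ¬ natZF i ∈ v 4 := by
        rw [e4, natZF_mem_iff]; omega
      obtain ⟨u, huM, hu⟩ := satM_ex.1 (this hmem hnmem)
      rw [satM_and, satM_rename, satM_rename] at hu
      obtain ⟨hu1, hu2⟩ := hu
      have hpm : ZFSet.pair (natZF i) u ∈ s :=
        (sat_pairMemF hM
          (v := Fin.cons u (Fin.cons (natZF i) (Fin.cons S (Fin.cons s v))) ∘ ![1, 0, 3])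
          (by exact hiM) (by exact huM) (by exact hsM')).1 hu1
      have hmx : u = natZF (p.2.sup fun g => g i) :=
        (sat_maxIsF hM
          (v := Fin.cons u (Fin.cons (natZF i) (Fin.cons S (Fin.cons s v))) ∘ ![1, 0, 7])
          (by show natZF i = natZF i; rfl) (by exact huM)
          (by show v 3 = finsetFunZF p.2; exact e3) (by exact h3)).1 hu2
      rw [hmx] at hpm
      rw [← es] at hpm
      have : hechlerBody p i = p.2.sup fun g => g i := by
        rw [hechlerBody, if_neg (by omega)]
      rw [this]
      exact hpm
    -- prefix
    have hpre : extList p N <+: q.1 := by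
      apply prefix_of_listZF_subset
      intro z hz
      obtain ⟨i, hi, rfl⟩ := mem_listZF.1 hz
      rw [extList_length] at hi
      rw [extList_getD hi]
      by_cases hc : i < p.1.length
      · have hmm : ZFSet.pair (natZF i) (natZF (hechlerBody p i)) ∈ listZF p.1 := by
          rw [← self_getD_body hc]
          exact mem_listZF.2 ⟨i, hc, rfl⟩
        exact hasub hmm
      · rcases lt_max_iff.1 hi with hiN | hiL
        · exact hC4' i (by omega) hiN
        · omega
    refine ⟨hpre, hside, ?_⟩
    -- the domination clause
    intro n hn hn' g hg
    rw [satM_all] at hC5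
    have hzmem : ZFSet.pair (natZF n) (natZF (q.1.getD n 0)) ∈ s := by
      rw [← es]
      exact pair_mem_listZF.2 ⟨hn', rfl⟩
    have hzM : ZFSet.pair (natZF n) (natZF (q.1.getD n 0)) ∈ M :=
      transM hM hsM' hzmem
    have := hC5 (ZFSet.pair (natZF n) (natZF (q.1.getD n 0))) hzM
    rw [satM_imp, satM_mem, satM_all] at this
    have h5 := this hzmem (natZF n) (natM hM n)
    rw [satM_all] at h5
    have h5' := h5 (natZF (q.1.getD n 0)) (natM hM _)
    rw [satM_imp, satM_rename, satM_imp, satM_neg, satM_mem, satM_imp, satM_neg,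
      satM_mem, satM_all] at h5'
    have hkpz : SatM M kpairF
        ((Fin.cons (natZF (q.1.getD n 0)) (Fin.cons (natZF n) (Fin.cons
          (ZFSet.pair (natZF n) (natZF (q.1.getD n 0))) (Fin.cons S (Fin.cons s v))))) ∘
          ![1, 0, 2]) := by
      refine (sat_kpairF hM (by exact natM hM n) (by exact natM hM _) (by exact hzM)).2 ?_
      show ZFSet.pair (natZF n) (natZF (q.1.getD n 0)) = ZFSet.pair (natZF n) (natZF (q.1.getD n 0))
      rfl
    have hlen : (extList p N).length ≤ n := hn
    rw [extList_length] at hlen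
    have hNn : N ≤ n := le_trans (le_max_left _ _) hlen
    have hLn : p.1.length ≤ n := le_trans (le_max_right _ _) hlen
    have hnN : ¬ natZF n ∈ v 0 := by
      rw [e0, natZF_mem_iff]; omega
    have hnL : ¬ natZF n ∈ v 4 := by
      rw [e4, natZF_mem_iff]; omega
    have h6 := h5' hkpz hnN hnL (funZF g) (by
      refine transM hM h3 ?_
      rw [e3]
      exact mem_finsetFunZF.2 ⟨g, hg, rfl⟩)
    rw [satM_imp, satM_mem] at h6
    have h7 := h6 (by show funZF g ∈ v 3; rw [e3]; exact mem_finsetFunZF.2 ⟨g, hg, rfl⟩)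
    obtain ⟨w, hwM, hw⟩ := satM_ex.1 h7
    rw [satM_and, satM_rename, satM_rename] at hw
    obtain ⟨hw1, hw2⟩ := hw
    have hpmw : ZFSet.pair (natZF n) w ∈ funZF g :=
      (sat_pairMemF hM
        (v := (Fin.cons w (Fin.cons (funZF g) (Fin.cons (natZF (q.1.getD n 0))
          (Fin.cons (natZF n) (Fin.cons (ZFSet.pair (natZF n) (natZF (q.1.getD n 0)))
          (Fin.cons S (Fin.cons s v))))))) ∘ ![3, 0, 1])
        (by exact natM hM n) (by exact hwM) (by
          refine transM hM h3 ?_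
          show funZF g ∈ v 3
          rw [e3]
          exact mem_finsetFunZF.2 ⟨g, hg, rfl⟩)).1 hw1
    rw [pair_mem_funZF] at hpmw
    have hsubw : w ⊆ natZF (q.1.getD n 0) :=
      (sat_subF hM
        (v := (Fin.cons w (Fin.cons (funZF g) (Fin.cons (natZF (q.1.getD n 0))
          (Fin.cons (natZF n) (Fin.cons (ZFSet.pair (natZF n) (natZF (q.1.getD n 0)))
          (Fin.cons S (Fin.cons s v))))))) ∘ ![0, 2])
        (by exact hwM)).1 hw2
    rw [hpmw] at hsubw
    exact natZF_subset_iff.1 hsubw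
  · intro hle
    obtain ⟨hpre, hside, hdom⟩ := hle
    have hlen : (extList p N).length ≤ q.1.length := hpre.length_le
    rw [extList_length] at hlen
    have hNq : N ≤ q.1.length := le_trans (le_max_left _ _) hlen
    have hLq : p.1.length ≤ q.1.length := le_trans (le_max_right _ _) hlen
    refine ⟨listZF q.1, hsM, ?_⟩
    rw [satM_ex]
    refine ⟨finsetFunZF q.2, hSM, ?_⟩
    rw [satM_and, satM_rename, satM_and, satM_rename, satM_and, satM_rename, satM_and]
    refine ⟨?_, ?_, ?_, ?_, ?_⟩
    · refine (sat_kpairF hM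
        (v := Fin.cons (finsetFunZF q.2) (Fin.cons (listZF q.1) v) ∘ ![1, 0, 3])
        (by exact hsM) (by exact hSM) (by exact h1)).2 ?_
      show v 1 = ZFSet.pair (listZF q.1) (finsetFunZF q.2)
      rw [e1]; rfl
    · refine (sat_subF hM
        (v := Fin.cons (finsetFunZF q.2) (Fin.cons (listZF q.1) v) ∘ ![5, 0])
        (by show v 3 ∈ M; exact h3)).2 ?_
      show v 3 ⊆ finsetFunZF q.2
      rw [e3]
      intro t ht
      obtain ⟨g, hg, rfl⟩ := mem_finsetFunZF.1 ht
      exact mem_finsetFunZF.2 ⟨g, hside hg, rfl⟩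
    · refine (sat_subF hM
        (v := Fin.cons (finsetFunZF q.2) (Fin.cons (listZF q.1) v) ∘ ![4, 1])
        (by show v 2 ∈ M; exact h2v)).2 ?_
      show v 2 ⊆ listZF q.1
      rw [e2]
      exact listZF_subset_of_prefix (extList_prefix.trans hpre)
    · rw [satM_all]
      intro i hiM
      rw [satM_imp, satM_mem, satM_imp, satM_neg, satM_mem]
      intro hiN hiL
      have hiN' : i ∈ natZF N := by
        have hx : i ∈ v 0 := hiN
        rwa [e0] at hx
      obtain ⟨j, hjN, rfl⟩ := mem_natZF.1 hiN'
      have hjL : p.1.length ≤ j := by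
        by_contra hc
        exact hiL (by show natZF j ∈ v 4; rw [e4]; exact natZF_mem_of_lt (by omega))
      rw [satM_ex]
      refine ⟨natZF (q.1.getD j 0), natM hM _, ?_⟩
      rw [satM_and, satM_rename, satM_rename]
      have hjq : j < q.1.length := by omega
      have hval : q.1.getD j 0 = hechlerBody p j := by
        have h1' := prefix_getD hpre (n := j) (by
          show j < (extList p N).length
          rw [extList_length]
          exact lt_max_iff.2 (Or.inl hjN))
        have h2' : (extList p N).getD j 0 = hechlerBody p j :=
          extList_getD (lt_max_iff.2 (Or.inl hjN))
        rw [← h2']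
        exact h1'
      constructor
      · refine (sat_pairMemF hM
          (v := Fin.cons (natZF (q.1.getD j 0)) (Fin.cons (natZF j)
            (Fin.cons (finsetFunZF q.2) (Fin.cons (listZF q.1) v))) ∘ ![1, 0, 3])
          (by exact natM hM j) (by exact natM hM _) (by exact hsM)).2 ?_
        show ZFSet.pair (natZF j) (natZF (q.1.getD j 0)) ∈ listZF q.1
        exact pair_mem_listZF.2 ⟨hjq, rfl⟩
      · refine (sat_maxIsF hM
          (v := Fin.cons (natZF (q.1.getD j 0)) (Fin.cons (natZF j)
            (Fin.cons (finsetFunZF q.2) (Fin.cons (listZF q.1) v))) ∘ ![1, 0, 7])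
          (by show natZF j = natZF j; rfl) (by exact natM hM _)
          (by show v 3 = finsetFunZF p.2; exact e3) (by exact h3)).2 ?_
        show natZF (q.1.getD j 0) = natZF (p.2.sup fun g => g j)
        rw [hval, hechlerBody, if_neg (by omega)]
    · rw [satM_all]
      intro z hzM
      rw [satM_imp, satM_mem]
      intro hzs
      have hzs' : z ∈ listZF q.1 := hzs
      obtain ⟨j, hj, rfl⟩ := mem_listZF.1 hzs'
      rw [satM_all]
      intro i hiM
      rw [satM_all]
      intro u huM
      rw [satM_imp, satM_rename, satM_imp, satM_neg, satM_mem, satM_imp, satM_neg,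
        satM_mem, satM_all]
      intro hkp hiN hiL g hgM
      have hkp' : ZFSet.pair (natZF j) (natZF (q.1.getD j 0)) = ZFSet.pair i u :=
        (sat_kpairF hM
          (v := (Fin.cons u (Fin.cons i (Fin.cons (ZFSet.pair (natZF j)
            (natZF (q.1.getD j 0))) (Fin.cons (finsetFunZF q.2)
            (Fin.cons (listZF q.1) v))))) ∘ ![1, 0, 2])
          (by exact hiM) (by exact huM) (by exact hzM)).1 hkp
      obtain ⟨ei, eu⟩ := ZFSet.pair_injective hkp'
      rw [satM_imp, satM_mem]
      intro hgA
      have hgA' : g ∈ finsetFunZF p.2 := by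
        have hx : g ∈ v 3 := hgA
        rwa [e3] at hx
      obtain ⟨g0, hg0, rfl⟩ := mem_finsetFunZF.1 hgA'
      have hjN : N ≤ j := by
        by_contra hc
        refine hiN ?_
        show i ∈ v 0
        rw [e0, ← ei]
        exact natZF_mem_of_lt (by omega)
      have hjL : p.1.length ≤ j := by
        by_contra hc
        refine hiL ?_
        show i ∈ v 4
        rw [e4, ← ei]
        exact natZF_mem_of_lt (by omega)
      have hgle : g0 j ≤ q.1.getD j 0 := by
        refine hdom j ?_ hj g0 hg0
        show (extList p N).length ≤ j
        rw [extList_length]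
        exact max_le hjN hjL
      rw [satM_ex]
      refine ⟨natZF (g0 j), natM hM _, ?_⟩
      rw [satM_and, satM_rename, satM_rename]
      constructor
      · refine (sat_pairMemF hM
          (v := (Fin.cons (natZF (g0 j)) (Fin.cons (funZF g0) (Fin.cons u (Fin.cons i
            (Fin.cons (ZFSet.pair (natZF j) (natZF (q.1.getD j 0)))
            (Fin.cons (finsetFunZF q.2) (Fin.cons (listZF q.1) v))))))) ∘ ![3, 0, 1])
          (by exact hiM) (by exact natM hM _) (by exact hgM)).2 ?_
        show ZFSet.pair i (natZF (g0 j)) ∈ funZF g0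
        rw [← ei]
        exact pair_mem_funZF.2 rfl
      · refine (sat_subF hM
          (v := (Fin.cons (natZF (g0 j)) (Fin.cons (funZF g0) (Fin.cons u (Fin.cons i
            (Fin.cons (ZFSet.pair (natZF j) (natZF (q.1.getD j 0)))
            (Fin.cons (finsetFunZF q.2) (Fin.cons (listZF q.1) v))))))) ∘ ![0, 2])
          (by exact natM hM _)).2 ?_
        show natZF (g0 j) ⊆ u
        rw [← eu]
        exact natZF_subset_of_le hgle

end LeCode

end HechlerAux
namespace HechlerAux

open ZFSet

lemma listZF_nil : listZF [] = ∅ := by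
  apply ZFSet.ext
  intro z
  simp only [ZFSet.notMem_empty, iff_false]
  intro hz
  obtain ⟨i, hi, _⟩ := mem_listZF.1 hz
  simp at hi

lemma listZF_concat (l : List ℕ) (a : ℕ) :
    listZF (l ++ [a]) = insert (ZFSet.pair (natZF l.length) (natZF a)) (listZF l) := by
  apply ZFSet.ext
  intro z
  rw [ZFSet.mem_insert_iff, mem_listZF, mem_listZF]
  constructor
  · rintro ⟨i, hi, rfl⟩
    simp only [List.length_append, List.length_singleton] at hi
    by_cases hc : i < l.length
    · refine Or.inr ⟨i, hc, ?_⟩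
      rw [List.getD_eq_getElem _ _ hc, List.getD_eq_getElem _ _ (by simp; omega)]
      rw [List.getElem_append_left hc]
    · have : i = l.length := by omega
      subst this
      rw [List.getD_eq_getElem _ _ (by simp)]
      rw [List.getElem_append_right (by omega)]
      simp
  · rintro (h | ⟨i, hi, rfl⟩)
    · refine ⟨l.length, by simp, ?_⟩
      rw [h, List.getD_eq_getElem _ _ (by simp)]
      rw [List.getElem_append_right (by omega)]
      simp
    · refine ⟨i, by simp; omega, ?_⟩
      rw [List.getD_eq_getElem _ _ hi, List.getD_eq_getElem _ _ (by simp; omega)]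
      rw [List.getElem_append_left hi]

variable {M : ZFSet} (hM : IsTransModelZFC M)

section Closure
include hM

lemma listZFM (l : List ℕ) : listZF l ∈ M := by
  induction l using List.reverseRecOn with
  | nil => rw [listZF_nil]; exact emptyM hM
  | append_singleton l a ih =>
    rw [listZF_concat]
    exact insertM hM (kpairM hM (natM hM _) (natM hM _)) ih

lemma extCondCodeM (p : HechlerCond) (hp : hechlerCondZF p ∈ M) (N : ℕ) :
    hechlerCondZF (extCond p N) ∈ M := by
  have hA : finsetFunZF p.2 ∈ M := (kpair_mem_components hM hp).2
  exact kpairM hM (listZFM hM _) hA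

end Closure

end HechlerAux
namespace HechlerAux

open ZFSet

/-- Existence of a condition-code below the canonical extension: `v 0 = z`, params
`x D a A L`. -/
def phiS : Fml 6 :=
  .ex ((Fml.mem 0 3).and ((kpairF.rename ![2, 0, 1]).and (leCodeF.rename ![2, 0, 4, 5, 6])))

/-- `v 0` equals the section set at `v 1`. Params `D a A L P2`. -/
def sprimeF : Fml 7 :=
  .all (.iff (.mem 0 1) ((Fml.mem 0 7).and (phiS.rename ![0, 2, 3, 4, 5, 6])))

/-- The family formula: `v 0 = y`; params `w∞ D a A L P2`. -/
def phiF : Fml 7 :=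
  Fml.and (.ex ((Fml.mem 0 2).and (sprimeF.rename ![1, 0, 3, 4, 5, 6, 7]))) (.ex (.mem 0 1))

/-- Upper bound clause of the `h`-defining formula (context 9:
`0=k,1=n,2=z,3=c,4=p,5=D,6=a,7=A,8=L`). -/
def ubF : Fml 9 :=
  .all (.imp (.mem 0 4)
    (.all (.all
      (.imp (kpairF.rename ![1, 0, 2])
      (.imp (natF.rename ![1])
      (.imp (.mem 0 8)
      (.imp (leCodeF.rename ![1, 0, 9, 10, 11])
      (.imp (subF.rename ![1, 4])
      (.all (.imp (bodyIsF.rename ![5, 0, 1])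
        (subF.rename ![0, 4])))))))))))

/-- Upper bound w.r.t. the body of `p` itself. -/
def ubpF : Fml 9 :=
  .all (.imp (bodyIsF.rename ![2, 0, 5]) (subF.rename ![0, 1]))

/-- Attainment clause. -/
def attF : Fml 9 :=
  (bodyIsF.rename ![1, 0, 4]).or
    (.ex ((Fml.mem 0 4).and (.ex (.ex
      ((kpairF.rename ![1, 0, 2]).and ((natF.rename ![1]).and ((Fml.mem 0 8).and
       ((leCodeF.rename ![1, 0, 9, 10, 11]).and ((subF.rename ![1, 4]).and
        (bodyIsF.rename ![4, 3, 0]))))))))))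

/-- The defining formula for the dominating function `h`: `v 0 = z`; params
`c p D a A L`. -/
def phiH : Fml 7 :=
  .ex (.ex ((kpairF.rename ![1, 0, 2]).and ((natF.rename ![1]).and ((natF.rename ![0]).and
    (ubF.and (ubpF.and attF))))))

variable {M : ZFSet} (hM : IsTransModelZFC M)

section PhiH
include hM

set_option maxHeartbeats 2000000 in
lemma sat_phiH {D : Set HechlerCond} {p : HechlerCond} {c : ZFSet} (hcM : c ∈ M)
    (hpM : hechlerCondZF p ∈ M)
    (hDM : hechlerSetZF D ∈ M)
    (qc : ℕ → HechlerCond)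
    (hqcD : ∀ N, qc N ∈ D)
    (hqcLe : ∀ N, hechlerLe (qc N) (extCond p N))
    (hqcC : ∀ N, ZFSet.pair (natZF N) (hechlerCondZF (qc N)) ∈ c)
    (hdec : ∀ (t : ZFSet), t ∈ c → ∀ (N' : ℕ) (Q : ZFSet),
      t = ZFSet.pair (natZF N') Q → ∀ q' ∈ D, Q = hechlerCondZF q' →
      hechlerLe q' (extCond p N') → Q = hechlerCondZF (qc N'))
    (h : ℕ → ℕ)
    (hdefh : ∀ n, h n = max (hechlerBody p n)
      ((Finset.range (n + 1)).sup fun N => hechlerBody (qc N) n))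
    {z : ZFSet} (hzM : z ∈ M) :
    SatM M phiH (Fin.cons z ![c, hechlerCondZF p, hechlerSetZF D,
      listZF p.1, finsetFunZF p.2, natZF p.1.length]) ↔
      ∃ n : ℕ, z = ZFSet.pair (natZF n) (natZF (h n)) := by
  have haM : listZF p.1 ∈ M := (kpair_mem_components hM hpM).1
  have hAM : finsetFunZF p.2 ∈ M := (kpair_mem_components hM hpM).2
  have hqMcode : ∀ N, hechlerCondZF (qc N) ∈ M :=
    fun N => (kpair_mem_components hM (transM hM hcM (hqcC N))).2
  unfold phiH
  rw [satM_ex]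
  constructor
  · rintro ⟨n, hnM, hn⟩
    rw [satM_ex] at hn
    obtain ⟨k, hkM, hk⟩ := hn
    rw [satM_and, satM_rename, satM_and, satM_rename, satM_and, satM_rename,
      satM_and, satM_and] at hk
    obtain ⟨hkp, hnn, hnk, hub, hubp, hatt⟩ := hk
    have hzpair : z = ZFSet.pair n k :=
      (sat_kpairF hM (by exact hnM) (by exact hkM) (by exact hzM)).1 hkp
    obtain ⟨n0, hn0⟩ : ∃ n0, n = natZF n0 := (sat_natF hM (by exact hnM)).1 hnn
    obtain ⟨k0, hk0⟩ : ∃ k0, k = natZF k0 := (sat_natF hM (by exact hkM)).1 hnk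
    subst hn0; subst hk0
    refine ⟨n0, ?_⟩
    rw [hzpair]
    -- it suffices to show k0 = h n0
    suffices hs : k0 = h n0 by rw [hs]
    -- upper bounds
    unfold ubF at hub
    rw [satM_all] at hub
    have hubQ : ∀ N, N ≤ n0 → hechlerBody (qc N) n0 ≤ k0 := by
      intro N hN
      have ht := hub (ZFSet.pair (natZF N) (hechlerCondZF (qc N)))
        (transM hM hcM (hqcC N))
      rw [satM_imp, satM_mem] at ht
      have ht2 := ht (hqcC N)
      rw [satM_all] at ht2
      have ht3 := ht2 (natZF N) (natM hM N)
      rw [satM_all] at ht3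
      have ht4 := ht3 (hechlerCondZF (qc N)) (hqMcode N)
      rw [satM_imp, satM_rename, satM_imp, satM_rename, satM_imp, satM_mem,
        satM_imp, satM_rename, satM_imp, satM_rename, satM_all] at ht4
      have h5 := ht4
        ((sat_kpairF hM (by exact natM hM N) (by exact hqMcode N)
          (by exact transM hM hcM (hqcC N))).2 (by
            show ZFSet.pair (natZF N) (hechlerCondZF (qc N)) =
              ZFSet.pair (natZF N) (hechlerCondZF (qc N))
            rfl))
        ((sat_natF hM (by exact natM hM N)).2 ⟨N, by show natZF N = natZF N; rfl⟩)
        (by show hechlerCondZF (qc N) ∈ hechlerSetZF D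
            exact mem_hechlerSetZF.2 ⟨qc N, hqcD N, rfl⟩)
        ((sat_leCodeF hM
          (by show natZF N = natZF N; rfl)
          (by show hechlerCondZF (qc N) = hechlerCondZF (qc N); rfl)
          (by exact hqMcode N)
          (by show listZF p.1 = listZF p.1; rfl) (by exact haM)
          (by show finsetFunZF p.2 = finsetFunZF p.2; rfl) (by exact hAM)
          (by show natZF p.1.length = natZF p.1.length; rfl)).2 (hqcLe N))
        ((sat_subF hM (by exact natM hM N)).2 (by
          show natZF N ⊆ natZF n0
          exact natZF_subset_of_le hN))
      have h6 := h5 (natZF (hechlerBody (qc N) n0)) (natM hM _)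
      rw [satM_imp, satM_rename, satM_rename] at h6
      have h7 := h6 ((sat_bodyIsF hM
        (by show natZF n0 = natZF n0; rfl)
        (by exact natM hM _)
        (by show hechlerCondZF (qc N) = hechlerCondZF (qc N); rfl)
        (by exact hqMcode N)).2 (by
          show natZF (hechlerBody (qc N) n0) = natZF (hechlerBody (qc N) n0); rfl))
      have h8 : natZF (hechlerBody (qc N) n0) ⊆ natZF k0 :=
        (sat_subF hM (by exact natM hM _)).1 h7
      exact natZF_subset_iff.1 h8
    have hubP : hechlerBody p n0 ≤ k0 := by
      unfold ubpF at hubp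
      rw [satM_all] at hubp
      have h1 := hubp (natZF (hechlerBody p n0)) (natM hM _)
      rw [satM_imp, satM_rename, satM_rename] at h1
      have h2 := h1 ((sat_bodyIsF hM
        (by show natZF n0 = natZF n0; rfl) (by exact natM hM _)
        (by show hechlerCondZF p = hechlerCondZF p; rfl) (by exact hpM)).2
        (by show natZF (hechlerBody p n0) = natZF (hechlerBody p n0); rfl))
      exact natZF_subset_iff.1 ((sat_subF hM (by exact natM hM _)).1 h2)
    -- attainment
    unfold attF at hatt
    rw [satM_or, satM_rename] at hatt
    have hkle : k0 ≤ h n0 := by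
      rcases hatt with hl | hr
      · have := (sat_bodyIsF hM
          (by show natZF n0 = natZF n0; rfl) (by exact natM hM k0)
          (by show hechlerCondZF p = hechlerCondZF p; rfl) (by exact hpM)).1 hl
        have hk0 : natZF k0 = natZF (hechlerBody p n0) := this
        rw [natZF_inj hk0, hdefh]
        exact le_max_left _ _
      · obtain ⟨t, htM, ht⟩ := satM_ex.1 hr
        rw [satM_and, satM_mem] at ht
        obtain ⟨htc, ht2⟩ := ht
        have htc' : t ∈ c := htc
        obtain ⟨N, hNM, hN⟩ := satM_ex.1 ht2
        obtain ⟨Q, hQM, hQ⟩ := satM_ex.1 hN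
        rw [satM_and, satM_rename, satM_and, satM_rename, satM_and, satM_mem,
          satM_and, satM_rename, satM_and, satM_rename, satM_rename] at hQ
        obtain ⟨hq1, hq2, hq3, hq4, hq5, hq6⟩ := hQ
        have htpair : t = ZFSet.pair N Q :=
          (sat_kpairF hM (by exact hNM) (by exact hQM) (by exact htM)).1 hq1
        obtain ⟨N0, rfl⟩ : ∃ N0, N = natZF N0 := (sat_natF hM (by exact hNM)).1 hq2
        have hQD : Q ∈ hechlerSetZF D := hq3
        obtain ⟨q', hq'D, hq'e⟩ := mem_hechlerSetZF.1 hQD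
        have hle' : hechlerLe q' (extCond p N0) :=
          (sat_leCodeF hM
            (by show natZF N0 = natZF N0; rfl)
            (by show Q = hechlerCondZF q'; exact hq'e)
            (by exact hQM)
            (by show listZF p.1 = listZF p.1; rfl) (by exact haM)
            (by show finsetFunZF p.2 = finsetFunZF p.2; rfl) (by exact hAM)
            (by show natZF p.1.length = natZF p.1.length; rfl)).1 hq4
        have hQe : Q = hechlerCondZF (qc N0) := hdec t htc' N0 Q htpair q' hq'D hq'e hle'
        have hNle : N0 ≤ n0 := by
          have := (sat_subF hM (by exact hNM)).1 hq5
          exact natZF_subset_iff.1 (show natZF N0 ⊆ natZF n0 from this)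
        have hbody := (sat_bodyIsF hM
          (by show natZF n0 = natZF n0; rfl) (by exact natM hM k0)
          (by show Q = hechlerCondZF (qc N0); exact hQe) (by exact hQM)).1 hq6
        have hk0e : natZF k0 = natZF (hechlerBody (qc N0) n0) := hbody
        rw [natZF_inj hk0e, hdefh]
        refine le_max_of_le_right ?_
        exact Finset.le_sup (f := fun N => hechlerBody (qc N) n0)
          (Finset.mem_range.2 (by omega))
    have hhle : h n0 ≤ k0 := by
      rw [hdefh]
      refine max_le hubP (Finset.sup_le fun N hN => ?_)
      exact hubQ N (by
        have := Finset.mem_range.1 hN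
        omega)
    omega
  · rintro ⟨n, rfl⟩
    refine ⟨natZF n, natM hM n, ?_⟩
    rw [satM_ex]
    refine ⟨natZF (h n), natM hM _, ?_⟩
    rw [satM_and, satM_rename, satM_and, satM_rename, satM_and, satM_rename,
      satM_and, satM_and]
    refine ⟨?_, ?_, ?_, ?_, ?_, ?_⟩
    · refine (sat_kpairF hM (by exact natM hM n) (by exact natM hM _)
        (by exact hzM)).2 ?_
      show ZFSet.pair (natZF n) (natZF (h n)) = ZFSet.pair (natZF n) (natZF (h n))
      rfl
    · exact (sat_natF hM (by exact natM hM n)).2 ⟨n, by show natZF n = natZF n; rfl⟩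
    · exact (sat_natF hM (by exact natM hM _)).2 ⟨h n, by show natZF (h n) = natZF (h n); rfl⟩
    · unfold ubF
      rw [satM_all]
      intro t htM
      rw [satM_imp, satM_mem]
      intro htc
      have htc' : t ∈ c := htc
      rw [satM_all]
      intro N hNM
      rw [satM_all]
      intro Q hQM
      rw [satM_imp, satM_rename, satM_imp, satM_rename, satM_imp, satM_mem,
        satM_imp, satM_rename, satM_imp, satM_rename, satM_all]
      intro hkp hnat hQD hleC hsub
      obtain ⟨N0, rfl⟩ : ∃ N0, N = natZF N0 := (sat_natF hM (by exact hNM)).1 hnat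
      have htpair : t = ZFSet.pair (natZF N0) Q :=
        (sat_kpairF hM (by exact hNM) (by exact hQM) (by exact htM)).1 hkp
      have hQD' : Q ∈ hechlerSetZF D := hQD
      obtain ⟨q', hq'D, hq'e⟩ := mem_hechlerSetZF.1 hQD'
      have hle' : hechlerLe q' (extCond p N0) :=
        (sat_leCodeF hM
          (by show natZF N0 = natZF N0; rfl)
          (by show Q = hechlerCondZF q'; exact hq'e)
          (by exact hQM)
          (by show listZF p.1 = listZF p.1; rfl) (by exact haM)
          (by show finsetFunZF p.2 = finsetFunZF p.2; rfl) (by exact hAM)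
          (by show natZF p.1.length = natZF p.1.length; rfl)).1 hleC
      have hQe : Q = hechlerCondZF (qc N0) := hdec t htc' N0 Q htpair q' hq'D hq'e hle'
      have hNle : N0 ≤ n := by
        have := (sat_subF hM (by exact hNM)).1 hsub
        exact natZF_subset_iff.1 (show natZF N0 ⊆ natZF n from this)
      intro k' hk'M
      rw [satM_imp, satM_rename, satM_rename]
      intro hbody
      have hk'e : k' = natZF (hechlerBody (qc N0) n) :=
        (sat_bodyIsF hM
          (by show natZF n = natZF n; rfl) (by exact hk'M)
          (by show Q = hechlerCondZF (qc N0); exact hQe) (by exact hQM)).1 hbody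
      refine (sat_subF hM (by exact hk'M)).2 ?_
      show k' ⊆ natZF (h n)
      rw [hk'e]
      refine natZF_subset_of_le ?_
      rw [hdefh]
      refine le_max_of_le_right ?_
      exact Finset.le_sup (f := fun N => hechlerBody (qc N) n)
        (Finset.mem_range.2 (by omega))
    · unfold ubpF
      rw [satM_all]
      intro k'' hk''M
      rw [satM_imp, satM_rename, satM_rename]
      intro hbody
      have hk''e : k'' = natZF (hechlerBody p n) :=
        (sat_bodyIsF hM
          (by show natZF n = natZF n; rfl) (by exact hk''M)
          (by show hechlerCondZF p = hechlerCondZF p; rfl) (by exact hpM)).1 hbody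
      refine (sat_subF hM (by exact hk''M)).2 ?_
      show k'' ⊆ natZF (h n)
      rw [hk''e]
      refine natZF_subset_of_le ?_
      rw [hdefh]
      exact le_max_left _ _
    · unfold attF
      rw [satM_or, satM_rename]
      by_cases hc : h n = hechlerBody p n
      · refine Or.inl ((sat_bodyIsF hM
          (by show natZF n = natZF n; rfl) (by exact natM hM _)
          (by show hechlerCondZF p = hechlerCondZF p; rfl) (by exact hpM)).2 ?_)
        show natZF (h n) = natZF (hechlerBody p n)
        rw [hc]
      · have hsup : h n = (Finset.range (n + 1)).sup fun N => hechlerBody (qc N) n := by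
          rw [hdefh] at hc ⊢
          rcases max_cases (hechlerBody p n)
            ((Finset.range (n + 1)).sup fun N => hechlerBody (qc N) n) with
            ⟨he, _⟩ | ⟨he, _⟩
          · exact absurd he hc
          · exact he
        obtain ⟨N0, hN0r, hN0⟩ := Finset.exists_mem_eq_sup (Finset.range (n + 1))
          ⟨0, Finset.mem_range.2 (by omega)⟩ fun N => hechlerBody (qc N) n
        refine Or.inr ?_
        rw [satM_ex]
        refine ⟨ZFSet.pair (natZF N0) (hechlerCondZF (qc N0)),
          transM hM hcM (hqcC N0), ?_⟩
        rw [satM_and, satM_mem]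
        refine ⟨hqcC N0, ?_⟩
        rw [satM_ex]
        refine ⟨natZF N0, natM hM _, ?_⟩
        rw [satM_ex]
        refine ⟨hechlerCondZF (qc N0), hqMcode N0, ?_⟩
        rw [satM_and, satM_rename, satM_and, satM_rename, satM_and, satM_mem,
          satM_and, satM_rename, satM_and, satM_rename, satM_rename]
        refine ⟨?_, ?_, ?_, ?_, ?_, ?_⟩
        · refine (sat_kpairF hM (by exact natM hM _) (by exact hqMcode N0)
            (by exact transM hM hcM (hqcC N0))).2 ?_
          show ZFSet.pair (natZF N0) (hechlerCondZF (qc N0)) =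
            ZFSet.pair (natZF N0) (hechlerCondZF (qc N0))
          rfl
        · exact (sat_natF hM (by exact natM hM _)).2 ⟨N0, by
            show natZF N0 = natZF N0; rfl⟩
        · show hechlerCondZF (qc N0) ∈ hechlerSetZF D
          exact mem_hechlerSetZF.2 ⟨qc N0, hqcD N0, rfl⟩
        · exact (sat_leCodeF hM
            (by show natZF N0 = natZF N0; rfl)
            (by show hechlerCondZF (qc N0) = hechlerCondZF (qc N0); rfl)
            (by exact hqMcode N0)
            (by show listZF p.1 = listZF p.1; rfl) (by exact haM)
            (by show finsetFunZF p.2 = finsetFunZF p.2; rfl) (by exact hAM)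
            (by show natZF p.1.length = natZF p.1.length; rfl)).2 (hqcLe N0)
        · refine (sat_subF hM (by exact natM hM _)).2 ?_
          show natZF N0 ⊆ natZF n
          exact natZF_subset_of_le (by
            have := Finset.mem_range.1 hN0r
            omega)
        · refine (sat_bodyIsF hM
            (by show natZF n = natZF n; rfl) (by exact natM hM _)
            (by show hechlerCondZF (qc N0) = hechlerCondZF (qc N0); rfl)
            (by exact hqMcode N0)).2 ?_
          show natZF (h n) = natZF (hechlerBody (qc N0) n)
          rw [hsup, hN0]

end PhiH

end HechlerAux
namespace HechlerAux

open ZFSet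

/-- `y` is the section set over `x`. -/
def IsSec (M P2 DH aH AH LH x y : ZFSet) : Prop :=
  ∀ z, z ∈ y ↔ z ∈ P2 ∧ SatM M phiS (Fin.cons z ![x, DH, aH, AH, LH])

end HechlerAux

open HechlerAux ZFSet in
theorem hechler_restricted_density' (M : ZFSet) (hM : IsTransModelZFC M) (f : ℕ → ℕ)
    (hdom : ∀ g : ℕ → ℕ, funZF g ∈ M → ∀ᶠ n in Filter.atTop, g n ≤ f n)
    (D : Set HechlerCond)
    (hDinM : hechlerSetZF D ∈ M)
    (hDsub : ∀ p ∈ D, hechlerCondZF p ∈ M)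
    (hDdense : ∀ p : HechlerCond, hechlerCondZF p ∈ M → ∃ q ∈ D, hechlerLe q p) :
    ∀ p : HechlerCond, hechlerCondZF p ∈ M → (∀ n, hechlerBody p n ≤ f n) →
      ∃ q ∈ D, hechlerLe q p ∧ ∀ n, hechlerBody q n ≤ f n := by
  intro p hp hbodyf
  classical
  have haM : listZF p.1 ∈ M := (kpair_mem_components hM hp).1
  have hAM : finsetFunZF p.2 ∈ M := (kpair_mem_components hM hp).2
  have hLM : natZF p.1.length ∈ M := natM hM _
  obtain ⟨wi, hwM, hwnat⟩ := infinityM hM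
  have hW1M : wi ∪ hechlerSetZF D ∈ M := unionM hM hwM hDinM
  obtain ⟨P1, hP1M, hP1⟩ := powM hM hW1M
  obtain ⟨P2, hP2M, hP2⟩ := powM hM hP1M
  obtain ⟨P3, hP3M, hP3⟩ := powM hM hP2M
  have hpairP2 : ∀ x Q : ZFSet, x ∈ wi → Q ∈ hechlerSetZF D → ZFSet.pair x Q ∈ P2 := by
    intro x Q hx hQ
    have hxM : x ∈ M := transM hM hwM hx
    have hQM : Q ∈ M := transM hM hDinM hQ
    refine hP2 _ (kpairM hM hxM hQM) ?_
    intro t ht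
    have ht' : t = ({x} : ZFSet) ∨ t = ({x, Q} : ZFSet) := by
      simpa [ZFSet.pair, ZFSet.mem_pair] using ht
    rcases ht' with rfl | rfl
    · refine hP1 _ (singM hM hxM) ?_
      intro u hu
      rw [ZFSet.mem_singleton.1 hu]
      exact ZFSet.mem_union.2 (Or.inl hx)
    · refine hP1 _ (upairM hM hxM hQM) ?_
      intro u hu
      rcases ZFSet.mem_pair.1 hu with rfl | rfl
      · exact ZFSet.mem_union.2 (Or.inl hx)
      · exact ZFSet.mem_union.2 (Or.inr hQ)
  -- section sets
  have hSex : ∀ x, x ∈ M → ∃ y ∈ M,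
      IsSec M P2 (hechlerSetZF D) (listZF p.1) (finsetFunZF p.2) (natZF p.1.length) x y := by
    intro x hx
    obtain ⟨y, hyM, hy⟩ := sepM hM phiS ![x, hechlerSetZF D, listZF p.1, finsetFunZF p.2,
      natZF p.1.length] (by intro i; fin_cases i; exacts [hx, hDinM, haM, hAM, hLM]) hP2M
    exact ⟨y, hyM, hy⟩
  have hSuniq : ∀ x y y', IsSec M P2 (hechlerSetZF D) (listZF p.1) (finsetFunZF p.2)
      (natZF p.1.length) x y → IsSec M P2 (hechlerSetZF D) (listZF p.1) (finsetFunZF p.2)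
      (natZF p.1.length) x y' → y = y' := by
    intro x y y' h1 h2
    apply ZFSet.ext
    intro z
    rw [h1 z, h2 z]
  -- decoding phiS at genuine naturals
  have hphiS : ∀ (N : ℕ) (z : ZFSet), z ∈ M →
      (SatM M phiS (Fin.cons z ![natZF N, hechlerSetZF D, listZF p.1, finsetFunZF p.2,
        natZF p.1.length]) ↔
        ∃ q ∈ D, z = ZFSet.pair (natZF N) (hechlerCondZF q) ∧ hechlerLe q (extCond p N)) := by
    intro N z hzM
    unfold phiS
    rw [satM_ex]
    constructor
    · rintro ⟨Q, hQM, hQ⟩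
      rw [satM_and, satM_mem, satM_and, satM_rename, satM_rename] at hQ
      obtain ⟨hQD, hkp, hle⟩ := hQ
      have hQD' : Q ∈ hechlerSetZF D := hQD
      obtain ⟨q, hqD, hqe⟩ := mem_hechlerSetZF.1 hQD'
      have hz : z = ZFSet.pair (natZF N) Q :=
        (sat_kpairF hM (by exact natM hM N) (by exact hQM) (by exact hzM)).1 hkp
      have hle' : hechlerLe q (extCond p N) :=
        (sat_leCodeF hM
          (by show natZF N = natZF N; rfl)
          (by show Q = hechlerCondZF q; exact hqe)
          (by exact hQM)
          (by show listZF p.1 = listZF p.1; rfl) (by exact haM)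
          (by show finsetFunZF p.2 = finsetFunZF p.2; rfl) (by exact hAM)
          (by show natZF p.1.length = natZF p.1.length; rfl)).1 hle
      exact ⟨q, hqD, by rw [hz, hqe], hle'⟩
    · rintro ⟨q, hqD, hze, hle⟩
      have hQM : hechlerCondZF q ∈ M := hDsub q hqD
      refine ⟨hechlerCondZF q, hQM, ?_⟩
      rw [satM_and, satM_mem, satM_and, satM_rename, satM_rename]
      refine ⟨?_, ?_, ?_⟩
      · show hechlerCondZF q ∈ hechlerSetZF D
        exact mem_hechlerSetZF.2 ⟨q, hqD, rfl⟩
      · refine (sat_kpairF hM (by exact natM hM N) (by exact hQM) (by exact hzM)).2 ?_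
        show z = ZFSet.pair (natZF N) (hechlerCondZF q)
        exact hze
      · exact (sat_leCodeF hM
          (by show natZF N = natZF N; rfl)
          (by show hechlerCondZF q = hechlerCondZF q; rfl)
          (by exact hQM)
          (by show listZF p.1 = listZF p.1; rfl) (by exact haM)
          (by show finsetFunZF p.2 = finsetFunZF p.2; rfl) (by exact hAM)
          (by show natZF p.1.length = natZF p.1.length; rfl)).2 hle
  -- generic decoding: shape of elements
  have hphiSx : ∀ (x z : ZFSet), x ∈ M → z ∈ M →
      SatM M phiS (Fin.cons z ![x, hechlerSetZF D, listZF p.1, finsetFunZF p.2,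
        natZF p.1.length]) → ∃ Q, z = ZFSet.pair x Q := by
    intro x z hxM hzM hz
    unfold phiS at hz
    obtain ⟨Q, hQM, hQ⟩ := satM_ex.1 hz
    rw [satM_and, satM_mem, satM_and, satM_rename] at hQ
    exact ⟨Q, (sat_kpairF hM (by exact hxM) (by exact hQM) (by exact hzM)).1 hQ.2.1⟩
  -- sprime decoding
  have hsprime : ∀ x y : ZFSet, x ∈ M → y ∈ M →
      (SatM M sprimeF ![y, x, hechlerSetZF D, listZF p.1, finsetFunZF p.2,
          natZF p.1.length, P2] ↔
        IsSec M P2 (hechlerSetZF D) (listZF p.1) (finsetFunZF p.2) (natZF p.1.length) x y) := by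
    intro x y hxM hyM
    unfold sprimeF
    rw [satM_all]
    have hveq : ∀ z : ZFSet, (Fin.cons z ![y, x, hechlerSetZF D, listZF p.1, finsetFunZF p.2,
        natZF p.1.length, P2]) ∘ ![0, 2, 3, 4, 5, 6] =
        Fin.cons z ![x, hechlerSetZF D, listZF p.1, finsetFunZF p.2, natZF p.1.length] := by
      intro z
      funext i
      fin_cases i <;> rfl
    constructor
    · intro hs z
      constructor
      · intro hzy
        have hzM : z ∈ M := transM hM hyM hzy
        have := hs z hzM
        rw [satM_iff, satM_mem, satM_and, satM_mem, satM_rename, hveq z] at this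
        exact this.1 hzy
      · rintro ⟨hzP2, hzS⟩
        have hzM : z ∈ M := transM hM hP2M hzP2
        have := hs z hzM
        rw [satM_iff, satM_mem, satM_and, satM_mem, satM_rename, hveq z] at this
        exact this.2 ⟨hzP2, hzS⟩
    · intro hs z hzM
      rw [satM_iff, satM_mem, satM_and, satM_mem, satM_rename, hveq z]
      exact hs z
  -- the family F
  obtain ⟨F, hFM, hFdef⟩ := sepM hM phiF ![wi, hechlerSetZF D, listZF p.1, finsetFunZF p.2,
    natZF p.1.length, P2] (by intro i; fin_cases i; exacts [hwM, hDinM, haM, hAM, hLM, hP2M])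
    hP3M
  have hFiff : ∀ y, y ∈ F ↔ (y ∈ P3 ∧ (∃ x, x ∈ M ∧ x ∈ wi ∧
      IsSec M P2 (hechlerSetZF D) (listZF p.1) (finsetFunZF p.2) (natZF p.1.length) x y) ∧
      ∃ t, t ∈ y) := by
    intro y
    rw [hFdef y]
    unfold phiF
    rw [satM_and, satM_ex, satM_ex]
    constructor
    · rintro ⟨hyP3, ⟨x, hxM, hx⟩, ⟨t, htM, ht⟩⟩
      rw [satM_and, satM_mem, satM_rename] at hx
      obtain ⟨hxw, hxs⟩ := hx
      have hyM : y ∈ M := transM hM hP3M hyP3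
      have hveq : (Fin.cons x (Fin.cons y ![wi, hechlerSetZF D, listZF p.1, finsetFunZF p.2,
          natZF p.1.length, P2])) ∘ ![1, 0, 3, 4, 5, 6, 7] =
          ![y, x, hechlerSetZF D, listZF p.1, finsetFunZF p.2, natZF p.1.length, P2] := by
        funext i
        fin_cases i <;> rfl
      rw [hveq] at hxs
      exact ⟨hyP3, ⟨x, hxM, hxw, (hsprime x y hxM hyM).1 hxs⟩, ⟨t, ht⟩⟩
    · rintro ⟨hyP3, ⟨x, hxM, hxw, hxs⟩, ⟨t, ht⟩⟩
      have hyM : y ∈ M := transM hM hP3M hyP3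
      refine ⟨hyP3, ⟨x, hxM, ?_⟩, ⟨t, transM hM hyM ht, ht⟩⟩
      rw [satM_and, satM_mem, satM_rename]
      have hveq : (Fin.cons x (Fin.cons y ![wi, hechlerSetZF D, listZF p.1, finsetFunZF p.2,
          natZF p.1.length, P2])) ∘ ![1, 0, 3, 4, 5, 6, 7] =
          ![y, x, hechlerSetZF D, listZF p.1, finsetFunZF p.2, natZF p.1.length, P2] := by
        funext i
        fin_cases i <;> rfl
      rw [hveq]
      exact ⟨hxw, (hsprime x y hxM hyM).2 hxs⟩
  -- choice on F
  obtain ⟨c, hcM, hcsel⟩ := choiceM hM hFM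
    (by
      intro y hyF
      exact ((hFiff y).1 hyF).2.2)
    (by
      intro y hyF y' hy'F hne t hty hty'
      obtain ⟨_, ⟨x, hxM, _, hxS⟩, _⟩ := (hFiff y).1 hyF
      obtain ⟨_, ⟨x', hx'M, _, hx'S⟩, _⟩ := (hFiff y').1 hy'F
      have hyM : y ∈ M := transM hM hFM hyF
      have htM : t ∈ M := transM hM hyM hty
      obtain ⟨hP2t, hSt⟩ := (hxS t).1 hty
      obtain ⟨hP2t', hSt'⟩ := (hx'S t).1 hty'
      obtain ⟨Q, hQ⟩ := hphiSx x t hxM htM hSt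
      obtain ⟨Q', hQ'⟩ := hphiSx x' t hx'M htM hSt'
      have hxx : x = x' := (ZFSet.pair_injective (hQ ▸ hQ')).1
      exact hne (hSuniq x y y' hxS (hxx ▸ hx'S)))
  -- density gives nonempty sections
  have hqex : ∀ N : ℕ, ∃ q ∈ D, hechlerLe q (extCond p N) :=
    fun N => hDdense _ (extCondCodeM hM p hp N)
  have hSN : ∀ N : ℕ, ∃ y, y ∈ M ∧
      IsSec M P2 (hechlerSetZF D) (listZF p.1) (finsetFunZF p.2) (natZF p.1.length)
        (natZF N) y ∧ y ∈ F := by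
    intro N
    obtain ⟨y, hyM, hy⟩ := hSex (natZF N) (natM hM N)
    have hyP3 : y ∈ P3 := hP3 y hyM (fun z hz => ((hy z).1 hz).1)
    obtain ⟨q, hqD, hqle⟩ := hqex N
    have htmem : ZFSet.pair (natZF N) (hechlerCondZF q) ∈ y := by
      refine (hy _).2 ⟨hpairP2 _ _ (hwnat N) (mem_hechlerSetZF.2 ⟨q, hqD, rfl⟩), ?_⟩
      exact (hphiS N _ (kpairM hM (natM hM N) (hDsub q hqD))).2 ⟨q, hqD, rfl, hqle⟩
    exact ⟨y, hyM, hy, (hFiff y).2 ⟨hyP3, ⟨natZF N, natM hM N, hwnat N, hy⟩, ⟨_, htmem⟩⟩⟩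
  -- selector decoding
  have hqcU : ∀ N : ℕ, ∃ q : HechlerCond, q ∈ D ∧ hechlerLe q (extCond p N) ∧
      ZFSet.pair (natZF N) (hechlerCondZF q) ∈ c ∧
      ∀ s, s ∈ c → (s ∈ P2 ∧ SatM M phiS (Fin.cons s ![natZF N, hechlerSetZF D, listZF p.1,
        finsetFunZF p.2, natZF p.1.length])) →
        s = ZFSet.pair (natZF N) (hechlerCondZF q) := by
    intro N
    obtain ⟨y, hyM, hy, hyF⟩ := hSN N
    obtain ⟨t, htc, hty, huniq⟩ := hcsel y hyF
    have htM : t ∈ M := transM hM hcM htc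
    obtain ⟨hP2t, hSt⟩ := (hy t).1 hty
    obtain ⟨q, hqD, hte, hle⟩ := (hphiS N t htM).1 hSt
    refine ⟨q, hqD, hle, hte ▸ htc, ?_⟩
    intro s hsc hs
    have hsy : s ∈ y := (hy s).2 hs
    rw [← hte]
    exact huniq s hsc hsy
  choose qc hqcD hqcLe hqcC hqcUn using hqcU
  -- the decoding hypothesis for sat_phiH
  have hdec : ∀ (t : ZFSet), t ∈ c → ∀ (N' : ℕ) (Q : ZFSet),
      t = ZFSet.pair (natZF N') Q → ∀ q' ∈ D, Q = hechlerCondZF q' →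
      hechlerLe q' (extCond p N') → Q = hechlerCondZF (qc N') := by
    intro t htc N' Q hte q' hq'D hq'e hle'
    have htP2 : t ∈ P2 := by
      rw [hte, hq'e]
      exact hpairP2 _ _ (hwnat N') (mem_hechlerSetZF.2 ⟨q', hq'D, rfl⟩)
    have htM : t ∈ M := transM hM hcM htc
    have hSt : SatM M phiS (Fin.cons t ![natZF N', hechlerSetZF D, listZF p.1,
        finsetFunZF p.2, natZF p.1.length]) := by
      refine (hphiS N' t htM).2 ⟨q', hq'D, ?_, hle'⟩
      rw [hte, hq'e]
    have := hqcUn N' t htc ⟨htP2, hSt⟩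
    rw [hte] at this
    exact (ZFSet.pair_injective this).2
  -- the dominating function
  let h : ℕ → ℕ := fun n => max (hechlerBody p n)
    ((Finset.range (n + 1)).sup fun N => hechlerBody (qc N) n)
  have hdefh : ∀ n, h n = max (hechlerBody p n)
      ((Finset.range (n + 1)).sup fun N => hechlerBody (qc N) n) := fun n => rfl
  -- funZF h ∈ M
  obtain ⟨Pw1, hPw1M, hPw1⟩ := powM hM hwM
  obtain ⟨Pw2, hPw2M, hPw2⟩ := powM hM hPw1M
  obtain ⟨Y, hYM, hYdef⟩ := sepM hM phiH ![c, hechlerCondZF p, hechlerSetZF D, listZF p.1,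
    finsetFunZF p.2, natZF p.1.length]
    (by intro i; fin_cases i; exacts [hcM, hp, hDinM, haM, hAM, hLM]) hPw2M
  have hYeq : Y = funZF h := by
    apply ZFSet.ext
    intro z
    rw [hYdef z]
    constructor
    · rintro ⟨hzPw2, hzS⟩
      have hzM : z ∈ M := transM hM hPw2M hzPw2
      obtain ⟨n, hze⟩ := (sat_phiH hM hcM hp hDinM qc hqcD hqcLe hqcC hdec h hdefh hzM).1 hzS
      exact mem_funZF.2 ⟨n, hze⟩
    · intro hzf
      obtain ⟨n, rfl⟩ := mem_funZF.1 hzf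
      have hzM : ZFSet.pair (natZF n) (natZF (h n)) ∈ M :=
        kpairM hM (natM hM _) (natM hM _)
      refine ⟨?_, (sat_phiH hM hcM hp hDinM qc hqcD hqcLe hqcC hdec h hdefh hzM).2 ⟨n, rfl⟩⟩
      refine hPw2 _ hzM ?_
      intro t ht
      have ht' : t = ({natZF n} : ZFSet) ∨ t = ({natZF n, natZF (h n)} : ZFSet) := by
        simpa [ZFSet.pair, ZFSet.mem_pair] using ht
      rcases ht' with rfl | rfl
      · refine hPw1 _ (singM hM (natM hM _)) ?_
        intro u hu
        rw [ZFSet.mem_singleton.1 hu]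
        exact hwnat n
      · refine hPw1 _ (upairM hM (natM hM _) (natM hM _)) ?_
        intro u hu
        rcases ZFSet.mem_pair.1 hu with rfl | rfl
        · exact hwnat n
        · exact hwnat _
  have hfM : funZF h ∈ M := hYeq ▸ hYM
  -- conclude
  obtain ⟨a0, ha0⟩ := Filter.eventually_atTop.1 (hdom h hfM)
  set N0 := max a0 p.1.length with hN0
  refine ⟨qc N0, hqcD N0, hechlerLe_trans (hqcLe N0) extCond_le, ?_⟩
  intro n
  by_cases hn : n < N0
  · have hlen1 : n < (extList p N0).length := by
      rw [extList_length]
      exact lt_max_iff.2 (Or.inl hn)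
    have hlen2 : n < (qc N0).1.length := lt_of_lt_of_le hlen1 (hqcLe N0).1.length_le
    have hb : hechlerBody (qc N0) n = (qc N0).1.getD n 0 := (self_getD_body hlen2).symm
    rw [hb, prefix_getD (hqcLe N0).1 hlen1]
    show (extList p N0).getD n 0 ≤ f n
    rw [extList_getD (by rwa [← extList_length])]
    exact hbodyf n
  · have h1 : hechlerBody (qc N0) n ≤ h n := by
      rw [hdefh]
      refine le_max_of_le_right ?_
      exact Finset.le_sup (f := fun N => hechlerBody (qc N) n)
        (Finset.mem_range.2 (by omega))
    refine le_trans h1 (ha0 n ?_)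
    have : a0 ≤ N0 := le_max_left _ _
    omega
/-- Let `M` be a transitive model of ZFC and `f ∈ ω^ω` a function eventually dominating
every `g ∈ ω^ω ∩ M`. If `D ∈ M` is a dense subset of the Hechler forcing `𝔻` as computed
in `M`, then `D ∩ 𝔻(f)` is dense in `𝔻(f) ∩ M`. -/
theorem hechler_restricted_density (M : ZFSet) (hM : IsTransModelZFC M) (f : ℕ → ℕ)
    (hdom : ∀ g : ℕ → ℕ, funZF g ∈ M → ∀ᶠ n in atTop, g n ≤ f n)
    (D : Set HechlerCond)
    (hDinM : hechlerSetZF D ∈ M)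
    (hDsub : ∀ p ∈ D, hechlerCondZF p ∈ M)
    (hDdense : ∀ p : HechlerCond, hechlerCondZF p ∈ M → ∃ q ∈ D, hechlerLe q p) :
    ∀ p : HechlerCond, hechlerCondZF p ∈ M → (∀ n, hechlerBody p n ≤ f n) →
      ∃ q ∈ D, hechlerLe q p ∧ ∀ n, hechlerBody q n ≤ f n :=
  hechler_restricted_density' M hM f hdom D hDinM hDsub hDdense

end
end

section
/- The following are equivalent: (1) the dominating number 𝔡 equals ℵ₁, i.e., there is a family of ℵ₁ functions in ω^ω such that every function in ω^ω is eventually dominated by one of them; (2) there is a sequence d : ω₁ → ω^ω increasing in the eventual domination order such that for every f ∈ ω^ω the set S_f = {α ∈ ω₁ : f(n) ≤ d(α)(n) for all n} is stationary in ω₁. -/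
noncomputable section

open Filter

/-- The first uncountable ordinal. -/
def omega1 : Ordinal := (Cardinal.aleph 1).ord

/-- `C` is closed and unbounded below `ω₁`. -/
def IsClubBelowOmega1 (C : Set Ordinal) : Prop :=
  (∀ a < omega1, ∃ b ∈ C, a ≤ b ∧ b < omega1) ∧
  (∀ a < omega1, a ≠ 0 → (∀ b < a, ∃ c ∈ C, b < c ∧ c < a) → a ∈ C)

/-- `S` is stationary in `ω₁`: it meets every club. -/
def IsStationaryInOmega1 (S : Set Ordinal) : Prop :=
  ∀ C, IsClubBelowOmega1 C → (S ∩ C).Nonempty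

/-!
(2) ⇒ (1): by stationarity every `f` lies pointwise below some `d α` with `α < ω₁`, so the range
of `d` on `ω₁` is dominating; it has at most `ℵ₁` elements, and no countable family dominates.

(1) ⇒ (2): enumerate the dominating family along `ω₁` and build by recursion a `≤*`-increasing
sequence `e` dominating it; this works because every countable family is `≤*`-bounded. Ulam's
matrix splits `ω₁` into `ℵ₁` disjoint stationary sets `T (γ, k)`. For `α ∈ T (γ, k)` with
`γ ≤ α`, replace `e α` by `e α ⊔ e γ ⊔ k`: the sequence stays `≤*`-increasing, since `e α`
eventually dominates `e γ ⊔ k`, and every `f` is pointwise below some `e γ ⊔ k`.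
-/

open Set Cardinal Function

universe u

theorem exists_forall_eventuallyLE_of_countable {s : Set (ℕ → ℕ)} (hs : s.Countable) :
    ∃ u : ℕ → ℕ, ∀ f ∈ s, f ≤ᶠ[atTop] u := by
  rcases s.eq_empty_or_nonempty with rfl | hne
  · exact ⟨0, by simp⟩
  obtain ⟨h, rfl⟩ := hs.exists_eq_range hne
  refine ⟨fun n => (Finset.range (n + 1)).sup (h · n), ?_⟩
  rintro _ ⟨i, rfl⟩
  filter_upwards [eventually_ge_atTop i] with n hn
  exact Finset.le_sup (f := (h · n)) (Finset.mem_range.2 (Nat.lt_succ_of_le hn))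

theorem not_countable_of_forall_exists_eventuallyLE {F : Set (ℕ → ℕ)}
    (hF : ∀ g : ℕ → ℕ, ∃ f ∈ F, g ≤ᶠ[atTop] f) : ¬ F.Countable := by
  intro hc
  obtain ⟨u, hu⟩ := exists_forall_eventuallyLE_of_countable hc
  obtain ⟨f, hf, hle⟩ := hF (u + 1)
  obtain ⟨n, hn⟩ := (hle.trans (hu f hf)).exists
  simp at hn

theorem exists_le_sup_const_of_eventuallyLE {f g : ℕ → ℕ} (h : f ≤ᶠ[atTop] g) :
    ∃ k : ℕ, f ≤ g ⊔ fun _ => k := by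
  obtain ⟨N, hN⟩ := eventually_atTop.1 h
  refine ⟨(Finset.range N).sup f, fun n => ?_⟩
  rcases lt_or_ge n N with hn | hn
  · exact le_sup_of_le_right (Finset.le_sup (Finset.mem_range.2 hn))
  · exact le_sup_of_le_left (hN n hn)

theorem exists_chain_above_of_countable_bounded {α X : Type*} [Preorder α] [WellFoundedLT α]
    (hIio : ∀ a : α, (Iio a).Countable) (r : X → X → Prop)
    (hr : ∀ s : Set X, s.Countable → ∃ u, ∀ x ∈ s, r x u) (G : α → X) :
    ∃ e : α → X, ∀ a, r (G a) (e a) ∧ ∀ b < a, r (e b) (e a) := by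
  choose u hu using hr
  have hcount : ∀ (a : α) (ih : ∀ b < a, X),
      (insert (G a) (range fun b : Iio a => ih b b.2)).Countable := fun a ih =>
    have := (hIio a).to_subtype
    (countable_range _).insert _
  let e : α → X := WellFoundedLT.fix fun a ih => u _ (hcount a ih)
  refine ⟨e, fun a => ?_⟩
  have he : e a = u _ (hcount a fun b _ => e b) := WellFoundedLT.fix_eq _ a
  refine ⟨he ▸ hu _ _ _ (mem_insert _ _), fun b hb => ?_⟩
  exact he ▸ hu _ _ _ (mem_insert_of_mem _ ⟨⟨b, hb⟩, rfl⟩)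

theorem dirSupClosed_iff_forall_lt {α : Type*} [LinearOrder α] {t : Set α} :
    DirSupClosed t ↔ ∀ a, (∃ b, b < a) → (∀ b < a, ∃ c ∈ t, b < c ∧ c < a) → a ∈ t := by
  rw [dirSupClosed_iff_of_linearOrder]
  constructor
  · intro ht a ⟨b, hb⟩ hacc
    obtain ⟨c, hct, -, hca⟩ := hacc b hb
    refine ht (inter_subset_left (t := Iio a)) ⟨c, hct, hca⟩
      ⟨fun x hx => le_of_lt hx.2, fun u hu => ?_⟩
    by_contra! hua
    obtain ⟨c, hct, huc, hca⟩ := hacc u hua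
    exact (hu ⟨hct, hca⟩).not_gt huc
  · intro ht d hdt ⟨x, hx⟩ a ha
    by_cases had : a ∈ d
    · exact hdt had
    have hxa : x < a := (ha.1 hx).lt_of_ne fun h => had (h ▸ hx)
    refine ht a ⟨x, hxa⟩ fun b hb => ?_
    obtain ⟨c, hcd, hbc, hca⟩ := ha.exists_between' had hb
    exact ⟨c, hdt hcd, hbc, hca⟩

theorem isClub_Ici {α : Type*} [LinearOrder α] (a : α) : IsClub (Ici a) :=
  ⟨(isUpperSet_Ici a).dirSupClosed, fun b => ⟨max a b, le_max_left a b, le_max_right a b⟩⟩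

theorem IsStationary.inter_isClub {α : Type*} [LinearOrder α] [WellFoundedLT α]
    (hcof : Order.cof α ≠ ℵ₀) {s t : Set α} (hs : IsStationary s) (ht : IsClub t) :
    IsStationary (s ∩ t) := fun u hu => by
  simpa only [inter_assoc] using hs (ht.inter hcof hu)

theorem aleph_one_le_mk_iff_not_countable {α : Type*} {s : Set α} :
    ℵ₁ ≤ #s ↔ ¬ s.Countable := by
  rw [aleph_one_le_iff, ← not_le, le_aleph0_iff_set_countable]

theorem exists_not_countable_fiber_nat {α : Type*} [Uncountable α] (N : α → ℕ) :
    ∃ n, ¬ (N ⁻¹' {n}).Countable := by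
  by_contra! h
  exact not_countable_univ ((countable_iUnion h).mono fun a _ => mem_iUnion.2 ⟨N a, rfl⟩)

section Ulam

variable {α : Type*} [LinearOrder α]

/-- The entry `(ξ, n)` of Ulam's matrix, when each `H a` is injective on `Iic a`. -/
def ulamSet (H : α → α → ℕ) (ξ : α) (n : ℕ) : Set α :=
  {a | ξ ≤ a ∧ H a ξ = n}

theorem iUnion_ulamSet (H : α → α → ℕ) (ξ : α) : ⋃ n, ulamSet H ξ n = Ici ξ := by
  ext a
  simp [ulamSet]

theorem disjoint_ulamSet {H : α → α → ℕ} (hH : ∀ a, InjOn (H a) (Iic a)) {ξ ξ' : α}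
    (h : ξ ≠ ξ') (n : ℕ) : Disjoint (ulamSet H ξ n) (ulamSet H ξ' n) :=
  disjoint_left.2 fun a ha ha' => h (hH a ha.1 ha'.1 (ha.2.trans ha'.2.symm))

theorem exists_isStationary_ulamSet [WellFoundedLT α] (hcof : Order.cof α ≠ ℵ₀)
    (H : α → α → ℕ) (ξ : α) : ∃ n, IsStationary (ulamSet H ξ n) := by
  have : Nonempty α := ⟨ξ⟩
  rw [← isStationary_iUnion_iff_of_countable hcof, iUnion_ulamSet]
  exact (isClub_Ici ξ).isStationary hcof

theorem exists_pairwise_disjoint_isStationary [WellFoundedLT α] [Uncountable α]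
    (hcof : Order.cof α ≠ ℵ₀) (hIic : ∀ a : α, (Iic a).Countable) {ι : Type*} (hι : #ι ≤ ℵ₁) :
    ∃ T : ι → Set α, (∀ i, IsStationary (T i)) ∧ Pairwise (Disjoint on T) := by
  choose H hH using fun a => countable_iff_exists_injOn.1 (hIic a)
  choose N hN using exists_isStationary_ulamSet hcof H
  obtain ⟨n, hn⟩ := exists_not_countable_fiber_nat N
  obtain ⟨J⟩ : Nonempty (ι ↪ N ⁻¹' {n}) := by
    rw [← lift_mk_le']
    exact (lift_le.2 hι).trans (by simpa using aleph_one_le_mk_iff_not_countable.2 hn)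
  refine ⟨fun i => ulamSet H (J i) n, fun i => ?_, fun i j hij => ?_⟩
  · have hJi : N (J i) = n := (J i).2
    simpa only [hJi] using hN (J i)
  · exact disjoint_ulamSet hH (fun h => hij (J.injective (Subtype.ext h))) n

end Ulam

section Scale

variable {α : Type*} [LinearOrder α] [WellFoundedLT α]

theorem exists_eventuallyLE_scale (hIio : ∀ a : α, (Iio a).Countable) (G : α → ℕ → ℕ) :
    ∃ e : α → ℕ → ℕ, (∀ a, G a ⊔ id ≤ᶠ[atTop] e a) ∧ ∀ ⦃a b⦄, a ≤ b → e a ≤ᶠ[atTop] e b := by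
  obtain ⟨e, he⟩ := exists_chain_above_of_countable_bounded hIio (· ≤ᶠ[atTop] ·)
    (fun _ hs => exists_forall_eventuallyLE_of_countable hs) (fun a => G a ⊔ id)
  refine ⟨e, fun a => (he a).1, fun a b hab => ?_⟩
  rcases hab.lt_or_eq with h | rfl
  · exact (he b).2 a h
  · exact EventuallyLE.refl _ _

theorem exists_increasing_isStationary_setOf_le [Uncountable α] (hcof : Order.cof α ≠ ℵ₀)
    (hIic : ∀ a : α, (Iic a).Countable) (hcard : #α ≤ ℵ₁) (G : α → ℕ → ℕ)
    (hG : ∀ g : ℕ → ℕ, ∃ a, g ≤ᶠ[atTop] G a) :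
    ∃ d : α → ℕ → ℕ, (∀ a b, a < b → d a ≤ᶠ[atTop] d b) ∧ ∀ f, IsStationary {a | f ≤ d a} := by
  classical
  obtain ⟨e, heG, he⟩ := exists_eventuallyLE_scale (fun a => (hIic a).mono Iio_subset_Iic_self) G
  have hprod : #(α × ℕ) ≤ ℵ₁ := by
    rw [mk_prod, mk_nat, lift_aleph0, lift_uzero]
    exact (mul_le_max _ _).trans
      (max_le (max_le hcard aleph0_lt_aleph_one.le) aleph0_lt_aleph_one.le)
  obtain ⟨T, hT, hTdisj⟩ := exists_pairwise_disjoint_isStationary hcof hIic hprod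
  let code : α × ℕ → ℕ → ℕ := fun p => e p.1 ⊔ fun _ => p.2
  have hcode : ∀ p b, p.1 ≤ b → code p ≤ᶠ[atTop] e b := fun p b hb => by
    filter_upwards [he hb, heG b, eventually_ge_atTop p.2] with n h₁ h₂ h₃
    exact max_le h₁ (h₃.trans (le_sup_right.trans h₂))
  let c : α → ℕ → ℕ := fun b => if h : ∃ p, b ∈ T p ∧ p.1 ≤ b then code h.choose else 0
  have hc_eq : ∀ p b, b ∈ T p → p.1 ≤ b → c b = code p := fun p b hb hpb => by
    have h : ∃ p, b ∈ T p ∧ p.1 ≤ b := ⟨p, hb, hpb⟩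
    have : h.choose = p := by_contra fun hne =>
      disjoint_left.1 (hTdisj hne) h.choose_spec.1 hb
    simp only [c, dif_pos h, this]
  have hc_le : ∀ b, c b ≤ᶠ[atTop] e b := fun b => by
    by_cases h : ∃ p, b ∈ T p ∧ p.1 ≤ b
    · exact hc_eq _ b h.choose_spec.1 h.choose_spec.2 ▸ hcode _ b h.choose_spec.2
    · simp only [c, dif_neg h]
      exact Eventually.of_forall fun n => Nat.zero_le _
  refine ⟨fun b => e b ⊔ c b, fun a b hab => ?_, fun f => ?_⟩
  · filter_upwards [hc_le a, he hab.le] with n h₁ h₂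
    exact le_sup_of_le_left (max_le h₂ (h₁.trans h₂))
  · obtain ⟨a, ha⟩ := hG f
    obtain ⟨k, hk⟩ := exists_le_sup_const_of_eventuallyLE
      (ha.trans ((heG a).mono fun n h => le_sup_left.trans h))
    refine ((hT (a, k)).inter_isClub hcof (isClub_Ici a)).mono fun b ⟨hb, hab⟩ => ?_
    show f ≤ e b ⊔ c b
    rw [hc_eq _ b hb hab]
    exact hk.trans le_sup_right

end Scale

theorem countable_Iio_iff_lt_omega1 {o : Ordinal.{u}} : (Iio o).Countable ↔ o < omega1 := by
  rw [← le_aleph0_iff_set_countable, mk_Iio_ordinal, lift_le_aleph0, omega1, lt_ord,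
    lt_aleph_one_iff]

theorem mk_Iio_omega1 : #(Iio omega1.{u}) = ℵ₁ := by
  simp [omega1]

instance : Uncountable (Iio omega1.{u}) := by
  rw [← aleph0_lt_mk_iff, mk_Iio_omega1]
  exact aleph0_lt_aleph_one

theorem cof_Iio_omega1 : Order.cof (Iio omega1.{u}) = ℵ₁ := by
  rw [Ordinal.cof_Iio, ← Ordinal.lift_cof, omega1, isRegular_aleph_one.cof_ord]
  simp

theorem countable_Iic_Iio_omega1 (a : Iio omega1.{u}) : (Iic a).Countable := by
  have : (Iic a.1).Countable := by
    rw [← Order.Iio_succ, countable_Iio_iff_lt_omega1]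
    exact (Cardinal.isSuccLimit_ord (aleph0_le_aleph 1)).succ_lt a.2
  exact this.preimage Subtype.val_injective

theorem isClub_preimage_val_iff {C : Set Ordinal.{u}} :
    IsClub (Subtype.val ⁻¹' C : Set (Iio omega1)) ↔ IsClubBelowOmega1 C := by
  rw [isClub_iff, dirSupClosed_iff_forall_lt, IsClubBelowOmega1, and_comm]
  refine and_congr ?_ ?_
  · simp [IsCofinal, and_comm]
  refine Subtype.forall.trans (forall₂_congr fun a ha => ?_)
  have hbelow : ∀ b < a, b < omega1 := fun b hb => hb.trans ha
  refine imp_congr ⟨fun ⟨b, hb⟩ => (zero_le.trans_lt (show (b : Ordinal) < a from hb)).ne',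
    fun h => ⟨⟨0, hbelow 0 (pos_iff_ne_zero.2 h)⟩, pos_iff_ne_zero.2 h⟩⟩ (imp_congr ?_ Iff.rfl)
  constructor
  · intro h b hb
    obtain ⟨c, hc, hbc, hca⟩ := h ⟨b, hbelow b hb⟩ hb
    exact ⟨c, hc, hbc, hca⟩
  · intro h b hb
    obtain ⟨c, hc, hbc, hca⟩ := h b hb
    exact ⟨⟨c, hbelow c hca⟩, hc, hbc, hca⟩

theorem isStationaryInOmega1_iff {S : Set Ordinal.{u}} :
    IsStationaryInOmega1 S ↔ IsStationary (Subtype.val ⁻¹' S : Set (Iio omega1)) := by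
  refine ⟨fun hS t ht => ?_, fun hS C hC => ?_⟩
  · have hC : IsClubBelowOmega1 (Subtype.val '' t) := by
      rwa [← isClub_preimage_val_iff, preimage_image_eq _ Subtype.val_injective]
    obtain ⟨_, hx, a, hat, rfl⟩ := hS _ hC
    exact ⟨a, hx, hat⟩
  · obtain ⟨a, haS, haC⟩ := hS (isClub_preimage_val_iff.2 hC)
    exact ⟨a, haS, haC⟩

theorem exists_range_eq_of_mk_eq_aleph_one {X : Type*} {F : Set X} (hF : #F = ℵ₁) :
    ∃ G : Iio omega1.{u} → X, range G = F := by
  obtain ⟨e⟩ : Nonempty (F ≃ Iio omega1.{u}) := by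
    rw [← lift_mk_eq', hF, mk_Iio_omega1]
    simp
  exact ⟨Subtype.val ∘ e.symm, by rw [e.symm.surjective.range_comp, Subtype.range_coe]⟩

theorem exists_increasing_isStationaryInOmega1_setOf_le (G : Iio omega1.{u} → ℕ → ℕ)
    (hG : ∀ g : ℕ → ℕ, ∃ a, g ≤ᶠ[atTop] G a) :
    ∃ d : Ordinal.{u} → ℕ → ℕ,
      (∀ α β : Ordinal, α < β → β < omega1 → d α ≤ᶠ[atTop] d β) ∧
      ∀ f : ℕ → ℕ, IsStationaryInOmega1 {α | α < omega1 ∧ ∀ n, f n ≤ d α n} := by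
  obtain ⟨d, hd_mono, hd_stat⟩ := exists_increasing_isStationary_setOf_le
    (cof_Iio_omega1 ▸ aleph0_lt_aleph_one.ne') countable_Iic_Iio_omega1 mk_Iio_omega1.le G hG
  refine ⟨fun o => if h : o < omega1 then d ⟨o, h⟩ else 0, fun a b hab hb => ?_, fun f => ?_⟩
  · simp only [dif_pos hb, dif_pos (hab.trans hb)]
    exact hd_mono ⟨a, hab.trans hb⟩ ⟨b, hb⟩ hab
  · rw [isStationaryInOmega1_iff]
    convert hd_stat f using 1
    ext ⟨o, ho⟩
    rw [mem_Iio] at ho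
    simp [ho, Pi.le_def]

theorem mk_image_Iio_omega1_le (d : Ordinal.{u} → ℕ → ℕ) : #(d '' Iio omega1) ≤ ℵ₁ := by
  have := mk_image_le_lift (f := d) (s := Iio omega1)
  rw [mk_Iio_omega1] at this
  simpa using this

/-- The following are equivalent: (1) there is a family of `ℵ₁` many functions in `ω^ω`
eventually dominating every function (i.e. `𝔡 = ℵ₁`); (2) there is a sequence
`d : ω₁ → ω^ω` increasing in the eventual domination order such that for every `f`
the set `S_f = {α < ω₁ : f ≤ d α pointwise}` is stationary in `ω₁`. -/
theorem dominating_number_aleph_one_iff_good_dominating_sequence :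
    (∃ F : Set (ℕ → ℕ), Cardinal.mk F = Cardinal.aleph 1 ∧
        ∀ g : ℕ → ℕ, ∃ f ∈ F, ∀ᶠ n in atTop, g n ≤ f n) ↔
      (∃ d : Ordinal → (ℕ → ℕ),
        (∀ α β : Ordinal, α < β → β < omega1 → ∀ᶠ n in atTop, d α n ≤ d β n) ∧
        ∀ f : ℕ → ℕ,
          IsStationaryInOmega1 {α | α < omega1 ∧ ∀ n, f n ≤ d α n}) := by
  constructor
  · rintro ⟨F, hF, hdom⟩
    obtain ⟨G, rfl⟩ := exists_range_eq_of_mk_eq_aleph_one hF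
    refine exists_increasing_isStationaryInOmega1_setOf_le G fun g => ?_
    obtain ⟨_, ⟨a, rfl⟩, hga⟩ := hdom g
    exact ⟨a, hga⟩
  · rintro ⟨d, -, hstat⟩
    have hdom : ∀ g : ℕ → ℕ, ∃ f ∈ d '' Iio omega1, g ≤ᶠ[atTop] f := fun g => by
      obtain ⟨⟨o, ho⟩, -, hg⟩ := (isStationaryInOmega1_iff.1 (hstat g)).nonempty
      exact ⟨d o, mem_image_of_mem d ho, Eventually.of_forall hg⟩
    refine ⟨d '' Iio omega1, (mk_image_Iio_omega1_le d).antisymm ?_, hdom⟩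
    exact aleph_one_le_mk_iff_not_countable.2 (not_countable_of_forall_exists_eventuallyLE hdom)
end
end

section
/- The following are equivalent: (1) the cofinality of the meager ideal on the reals is ℵ₁; (2) the cofinality of the nowhere dense ideal is ℵ₁, i.e., there is a family of ℵ₁ perfect nowhere dense trees on {0,1} such that every nowhere dense tree is contained in one of them. -/
/-!
The two cofinalities are in fact equal. A family `𝒯` of nowhere dense trees cofinal among all
of them gives the cofinal meagre family `⋃ η, [U(η)]`, `U ∈ 𝒯`: the countably many nowhere dense
pieces of a meagre set, grafted above the nodes `1ⁿ0`, form a single nowhere dense tree.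

Conversely, let `D(e, y, N)` (`mismatchFrom e y N`) be the closed nowhere dense set of points
differing from `y` on every interval `[e n, e (n + 1))` with `n ≥ N`, and `M(e, y)` the union of
these over `N`. Building `e` and `y` block by block, every meagre set lies in some `M(e, y)`, and
every nowhere dense tree `T` (padded with `false`s to points) in some `D(e, y, 0)`. A diagonal
argument shows that `M(e, y) ⊆ M(e', y')` forces almost every `e'`-interval to contain an
`e`-interval on which `y` and `y'` agree, hence `D(e, y, 0) ⊆ D(e', y', N)` for some `N`. So if
`B` is a cofinal meagre family and `Y ⊆ M(e_Y, y_Y)` for `Y ∈ B`, the trees of the sets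
`D(e_Y, y_Y, N)`, made perfect, form a cofinal family indexed by `B × ℕ`; since the meagre
cofinality is uncountable, `|B × ℕ| = |B|`.
-/

noncomputable section

/-- A (prefix-closed) tree on `{0,1}`. -/
def IsTree (T : Set (List Bool)) : Prop := ∀ s ∈ T, ∀ t : List Bool, t <+: s → t ∈ T

/-- A perfect tree: nonempty and every node has two incomparable extensions in the tree. -/
def PerfectTree (T : Set (List Bool)) : Prop :=
  T.Nonempty ∧ IsTree T ∧
    ∀ s ∈ T, ∃ t₁ ∈ T, ∃ t₂ ∈ T, s <+: t₁ ∧ s <+: t₂ ∧ ¬ t₁ <+: t₂ ∧ ¬ t₂ <+: t₁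

/-- A nowhere dense tree: every finite sequence has an extension outside the tree. -/
def NwdTree (T : Set (List Bool)) : Prop := ∀ s : List Bool, ∃ t, s <+: t ∧ t ∉ T

/-- The cofinality of the meager ideal on Cantor space `2^ω`: the least cardinality of a
family of meager sets such that every meager set is contained in one of them. -/
def meagerCof : Cardinal :=
  sInf {c | ∃ B : Set (Set (ℕ → Bool)), (∀ Y ∈ B, IsMeagre Y) ∧
    (∀ X : Set (ℕ → Bool), IsMeagre X → ∃ Y ∈ B, X ⊆ Y) ∧ Cardinal.mk B = c}

/-- The cofinality of the nowhere dense ideal, in its tree form: the least cardinality of a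
family of perfect nowhere dense trees on `{0,1}` such that every nowhere dense tree is
contained in one of them. -/
def nwdTreeCof : Cardinal :=
  sInf {c | ∃ 𝒯 : Set (Set (List Bool)), (∀ T ∈ 𝒯, PerfectTree T ∧ NwdTree T) ∧
    (∀ T : Set (List Bool), IsTree T → NwdTree T → ∃ U ∈ 𝒯, T ⊆ U) ∧ Cardinal.mk 𝒯 = c}


open Set Filter Cardinal

section General

variable {X : Type*} [TopologicalSpace X]

theorem IsNowhereDense.union {s t : Set X} (hs : IsNowhereDense s) (ht : IsNowhereDense t) :
    IsNowhereDense (s ∪ t) := by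
  rw [IsNowhereDense, closure_union,
    interior_union_isClosed_of_interior_empty isClosed_closure ht]
  exact hs

theorem isNowhereDense_accumulate {f : ℕ → Set X} (hf : ∀ n, IsNowhereDense (f n)) (n : ℕ) :
    IsNowhereDense (accumulate f n) := by
  induction n with
  | zero => simpa using hf 0
  | succ n ih => simpa [accumulate_succ] using ih.union (hf (n + 1))

theorem IsMeagre.exists_isNowhereDense_seq {s : Set X} (hs : IsMeagre s) :
    ∃ f : ℕ → Set X, (∀ n, IsNowhereDense (f n)) ∧ s ⊆ ⋃ n, f n := by
  obtain ⟨S, hS, hcount, hsub⟩ := isMeagre_iff_countable_union_isNowhereDense.mp hs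
  obtain ⟨f, hf⟩ := (hcount.insert ∅).exists_eq_range (insert_nonempty _ _)
  refine ⟨f, fun n => ?_, hsub.trans (sUnion_subset fun t ht => ?_)⟩
  · have hn : f n ∈ insert ∅ S := hf ▸ mem_range_self n
    rcases hn with h | h
    · simp [h]
    · exact hS _ h
  · obtain ⟨n, rfl⟩ : t ∈ range f := hf ▸ mem_insert_of_mem _ ht
    exact subset_iUnion f n

theorem not_countable_of_isMeagre_cofinal [BaireSpace X] [Nonempty X]
    (hpt : ∀ x : X, IsMeagre {x}) {B : Set (Set X)} (hB : ∀ Y ∈ B, IsMeagre Y)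
    (hcof : ∀ A, IsMeagre A → ∃ Y ∈ B, A ⊆ Y) : ¬ B.Countable := by
  intro hcount
  have hunion : IsMeagre (⋃ Y ∈ B, Y) := isMeagre_biUnion hcount hB
  obtain ⟨x, hx⟩ : ∃ x, x ∉ ⋃ Y ∈ B, Y := by
    by_contra! h
    exact not_isMeagre_of_isOpen isOpen_univ univ_nonempty
      (hunion.mono fun x _ => h x)
  obtain ⟨Y, hY, hxY⟩ := hcof {x} (hpt x)
  exact hx (mem_biUnion hY (hxY rfl))

end General

namespace CantorTree

def res (x : ℕ → Bool) (n : ℕ) : List Bool := (List.range n).map x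

def cyl (s : List Bool) : Set (ℕ → Bool) := {x | res x s.length = s}

def pad (s : List Bool) : ℕ → Bool := fun i => s.getD i false

@[simp]
theorem length_res (x : ℕ → Bool) (n : ℕ) : (res x n).length = n := by
  simp [res]

theorem res_eq_res_iff {x z : ℕ → Bool} {n : ℕ} : res x n = res z n ↔ ∀ i < n, x i = z i := by
  simp [res]

theorem res_add (x : ℕ → Bool) (m n : ℕ) :
    res x (m + n) = res x m ++ res (fun i => x (m + i)) n := by
  simp [res, List.range_add, Function.comp_def]

theorem res_succ (x : ℕ → Bool) (n : ℕ) : res x (n + 1) = res x n ++ [x n] := by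
  simp [res, List.range_succ]

theorem take_res (x : ℕ → Bool) (m n : ℕ) : (res x n).take m = res x (min m n) := by
  rw [res, res, ← List.map_take, List.take_range]

theorem res_prefix_res (x : ℕ → Bool) {m n : ℕ} (h : m ≤ n) : res x m <+: res x n := by
  rw [List.prefix_iff_eq_take, length_res, take_res, min_eq_left h]

theorem prefix_res_iff {s : List Bool} {x : ℕ → Bool} {n : ℕ} (h : s.length ≤ n) :
    s <+: res x n ↔ x ∈ cyl s := by
  rw [List.prefix_iff_eq_take, take_res, min_eq_left h, cyl, mem_ofPred_eq, eq_comm]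

theorem res_mem_cyl (x : ℕ → Bool) (n : ℕ) : x ∈ cyl (res x n) := by
  simp [cyl]

theorem pad_of_length_le {s : List Bool} {i : ℕ} (h : s.length ≤ i) : pad s i = false := by
  simp [pad, h]

theorem pad_mem_cyl (s : List Bool) : pad s ∈ cyl s := by
  refine List.ext_getElem (by simp) fun i hi _ => ?_
  simp [res, pad, List.getD_eq_getElem?_getD, List.getElem?_eq_getElem (by simpa using hi)]

theorem cyl_anti {s t : List Bool} (h : s <+: t) : cyl t ⊆ cyl s := fun _ hx =>
  (prefix_res_iff h.length_le).mp (hx.symm ▸ h)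

theorem cyl_res (x : ℕ → Bool) (n : ℕ) : cyl (res x n) = PiNat.cylinder x n := by
  ext z
  simp [cyl, res_eq_res_iff, PiNat.mem_cylinder_iff]

theorem mem_cyl_res_iff {x z : ℕ → Bool} {n : ℕ} : x ∈ cyl (res z n) ↔ ∀ i < n, x i = z i := by
  rw [cyl_res, PiNat.mem_cylinder_iff]

theorem isOpen_cyl (s : List Bool) : IsOpen (cyl s) := by
  have : s = res (pad s) s.length := (pad_mem_cyl s).symm
  rw [this, cyl_res]
  exact PiNat.isOpen_cylinder _ _ _

theorem exists_cyl_subset {U : Set (ℕ → Bool)} (hU : IsOpen U) {x : ℕ → Bool} (hx : x ∈ U) :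
    ∃ n, cyl (res x n) ⊆ U := by
  obtain ⟨_, ⟨z, n, rfl⟩, hxz, hsub⟩ :=
    (PiNat.isTopologicalBasis_cylinders fun _ => Bool).exists_subset_of_mem_open hx hU
  exact ⟨n, by rwa [cyl_res, PiNat.mem_cylinder_iff_eq.mp hxz]⟩

theorem isNowhereDense_iff_forall_exists_disjoint_cyl {C : Set (ℕ → Bool)} :
    IsNowhereDense C ↔ ∀ s, ∃ t, s <+: t ∧ Disjoint (cyl t) C := by
  constructor
  · intro hC s
    obtain ⟨x, hxs, hxC⟩ : ∃ x ∈ cyl s, x ∉ closure C := by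
      by_contra! h
      have := interior_maximal h (isOpen_cyl s)
      rw [hC] at this
      exact this (pad_mem_cyl s)
    obtain ⟨n, hn⟩ := exists_cyl_subset isClosed_closure.isOpen_compl hxC
    refine ⟨res x (max n s.length), (prefix_res_iff (le_max_right _ _)).mpr hxs, ?_⟩
    exact disjoint_compl_left.mono_right subset_closure |>.mono_left
      ((cyl_anti (res_prefix_res x (le_max_left _ _))).trans hn)
  · intro h
    refine eq_empty_of_forall_notMem fun x hx => ?_
    obtain ⟨n, hn⟩ := exists_cyl_subset isOpen_interior hx
    obtain ⟨t, hpre, hdisj⟩ := h (res x n)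
    have hsub : cyl t ⊆ closure C := ((cyl_anti hpre).trans hn).trans interior_subset
    exact disjoint_left.mp (hdisj.closure_right (isOpen_cyl t)) (pad_mem_cyl t)
      (hsub (pad_mem_cyl t))

theorem isNowhereDense_singleton (x : ℕ → Bool) : IsNowhereDense {x} := by
  refine isNowhereDense_iff_forall_exists_disjoint_cyl.mpr fun s => ?_
  refine ⟨s ++ [!x s.length], List.prefix_append _ _, disjoint_singleton_right.mpr fun hx => ?_⟩
  have h : res x s.length ++ [x s.length] = s ++ [!x s.length] := by
    rw [← res_succ]; simpa [cyl] using hx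
  simp at h

def branches (T : Set (List Bool)) : Set (ℕ → Bool) := {x | ∀ n, res x n ∈ T}

def treeOf (C : Set (ℕ → Bool)) : Set (List Bool) := {s | (cyl s ∩ C).Nonempty}

/-- The tree `S(η)`. -/
def subtree (S : Set (List Bool)) (η : List Bool) : Set (List Bool) := {τ | η ++ τ ∈ S}

theorem isNowhereDense_branches {T : Set (List Bool)} (hT : NwdTree T) :
    IsNowhereDense (branches T) := by
  refine isNowhereDense_iff_forall_exists_disjoint_cyl.mpr fun s => ?_
  obtain ⟨t, hst, ht⟩ := hT s
  refine ⟨t, hst, disjoint_left.mpr fun x hx hxT => ht ?_⟩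
  exact (hx : res x t.length = t) ▸ hxT t.length

theorem isTree_treeOf (C : Set (ℕ → Bool)) : IsTree (treeOf C) :=
  fun _ ⟨x, hxs, hxC⟩ _ hts => ⟨x, cyl_anti hts hxs, hxC⟩

theorem treeOf_mono {C D : Set (ℕ → Bool)} (h : C ⊆ D) : treeOf C ⊆ treeOf D :=
  fun _ hs => hs.mono (inter_subset_inter_right _ h)

theorem nwdTree_treeOf {C : Set (ℕ → Bool)} (hC : IsNowhereDense C) : NwdTree (treeOf C) := by
  intro s
  obtain ⟨t, hst, hdisj⟩ := isNowhereDense_iff_forall_exists_disjoint_cyl.mp hC s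
  exact ⟨t, hst, fun ht => (ht : (cyl t ∩ C).Nonempty).ne_empty hdisj.inter_eq⟩

theorem subset_branches_treeOf (C : Set (ℕ → Bool)) : C ⊆ branches (treeOf C) :=
  fun x hx n => ⟨x, res_mem_cyl x n, hx⟩

theorem nwdTree_subtree {S : Set (List Bool)} (hS : NwdTree S) (η : List Bool) :
    NwdTree (subtree S η) := by
  intro σ
  obtain ⟨t, ⟨w, rfl⟩, ht⟩ := hS (η ++ σ)
  exact ⟨σ ++ w, List.prefix_append _ _, by simpa [subtree] using ht⟩

theorem subset_treeOf_image_pad (T : Set (List Bool)) : T ⊆ treeOf (pad '' T) :=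
  fun s hs => ⟨pad s, pad_mem_cyl s, mem_image_of_mem _ hs⟩

theorem isNowhereDense_image_pad {T : Set (List Bool)} (hT : IsTree T) (hnwd : NwdTree T) :
    IsNowhereDense (pad '' T) := by
  refine isNowhereDense_iff_forall_exists_disjoint_cyl.mpr fun s => ?_
  obtain ⟨t, hst, ht⟩ := hnwd s
  refine ⟨t ++ [true], hst.trans (List.prefix_append _ _), ?_⟩
  refine disjoint_left.mpr fun _ hx ⟨u, hu, hux⟩ => ht (hT u hu t ?_)
  subst hux
  have hres : res (pad u) t.length = t ∧ pad u t.length = true := by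
    simpa [cyl, res_succ] using hx
  have hlt : t.length < u.length := by
    by_contra! hle
    simp [pad_of_length_le hle] at hres
  have hpre := res_prefix_res (pad u) hlt.le
  rwa [hres.1, (pad_mem_cyl u : res _ _ = u)] at hpre

/-- Grafting the words with no two consecutive `true`s makes the tree perfect; it stays nowhere
dense because `t ++ [true, true]` escapes it whenever `t ∉ V` and `t ≠ []`. -/
def perfectHull (V : Set (List Bool)) : Set (List Bool) :=
  {u | ∃ s ∈ insert [] V, ∃ w, ¬ [true, true] <:+: w ∧ u <+: s ++ w}

theorem not_infix_append_false_cons {w : List Bool} (hw : ¬ [true, true] <:+: w) (b : Bool) :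
    ¬ [true, true] <:+: w ++ [false, b] := by
  have hwb : w ++ [false, b] = w ++ [false] ++ [b] := by simp
  rw [hwb, List.infix_concat_iff, List.infix_concat_iff, ← hwb]
  rintro (h | h | h)
  · have := List.suffix_of_suffix_length_le h (List.suffix_append w [false, b]) (by simp)
    simpa using this.eq_of_length (by simp)
  · obtain ⟨t, ht, -⟩ := (List.suffix_concat_iff.mp h).resolve_left (by simp)
    simpa using congrArg List.getLast? ht
  · exact hw h

theorem isTree_perfectHull (V : Set (List Bool)) : IsTree (perfectHull V) :=
  fun _ ⟨s, hs, w, hw, hu⟩ _ hvu => ⟨s, hs, w, hw, hvu.trans hu⟩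

theorem subset_perfectHull (V : Set (List Bool)) : V ⊆ perfectHull V :=
  fun s hs => ⟨s, mem_insert_of_mem _ hs, [], by simp, by simp⟩

theorem perfectTree_perfectHull (V : Set (List Bool)) : PerfectTree (perfectHull V) := by
  refine ⟨⟨[], [], mem_insert _ _, [], by simp, by simp⟩, isTree_perfectHull V, ?_⟩
  rintro u ⟨s, hs, w, hw, hu⟩
  have hmem : ∀ b, s ++ (w ++ [false, b]) ∈ perfectHull V := fun b =>
    ⟨s, hs, _, not_infix_append_false_cons hw b, List.prefix_rfl⟩
  have hext : ∀ b, u <+: s ++ (w ++ [false, b]) := fun b =>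
    hu.trans (by rw [← List.append_assoc]; exact List.prefix_append _ _)
  have hinc : ∀ b b', b ≠ b' → ¬ s ++ (w ++ [false, b]) <+: s ++ (w ++ [false, b']) :=
    fun b b' hne hp => hne (by simpa using hp.eq_of_length (by simp))
  exact ⟨_, hmem false, _, hmem true, hext false, hext true, hinc _ _ (by simp),
    hinc _ _ (by simp)⟩

theorem nwdTree_perfectHull {V : Set (List Bool)} (hV : IsTree V) (hnwd : NwdTree V) :
    NwdTree (perfectHull V) := by
  intro s
  obtain ⟨t, hst, ht⟩ := hnwd (s ++ [false])
  have htne : t ≠ [] := by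
    rintro rfl
    simpa using hst.length_le
  refine ⟨t ++ [true, true], ((List.prefix_append _ _).trans hst).trans (List.prefix_append _ _),
    ?_⟩
  rintro ⟨s₀, hs₀, w, hw, r, hr⟩
  rw [List.append_assoc, List.append_eq_append_iff] at hr
  rcases hr with ⟨a, rfl, -⟩ | ⟨c, -, rfl⟩
  · rcases hs₀ with h | h
    · exact htne (List.append_eq_nil_iff.mp h).1
    · exact ht (hV _ h t (List.prefix_append _ _))
  · exact hw (List.infix_append' _ _ _)

def graft (T : ℕ → Set (List Bool)) : Set (List Bool) :=
  {u | ∃ n, ∃ τ ∈ T n, u <+: List.replicate n true ++ false :: τ}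

theorem replicate_append_false_cons_prefix {a b : ℕ} {v w : List Bool}
    (h : List.replicate a true ++ false :: v <+: List.replicate b true ++ false :: w) :
    a = b ∧ v <+: w := by
  induction a generalizing b with
  | zero => cases b <;> simp_all [List.replicate_succ]
  | succ a ih =>
    cases b with
    | zero => simp [List.replicate_succ] at h
    | succ b => simpa using ih (by simpa [List.replicate_succ] using h)

theorem exists_append_false_eq_replicate (s : List Bool) :
    ∃ j r, s ++ [false] = List.replicate j true ++ false :: r := by
  induction s with
  | nil => exact ⟨0, [], rfl⟩
  | cons b s ih =>
    obtain ⟨j, r, h⟩ := ih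
    cases b
    · exact ⟨0, s ++ [false], rfl⟩
    · exact ⟨j + 1, r, by simp [h, List.replicate_succ]⟩

theorem isTree_graft (T : ℕ → Set (List Bool)) : IsTree (graft T) :=
  fun _ ⟨n, τ, hτ, hu⟩ _ hvu => ⟨n, τ, hτ, hvu.trans hu⟩

theorem nwdTree_graft {T : ℕ → Set (List Bool)} (hT : ∀ n, IsTree (T n))
    (hnwd : ∀ n, NwdTree (T n)) : NwdTree (graft T) := by
  intro s
  obtain ⟨j, r, hjr⟩ := exists_append_false_eq_replicate s
  obtain ⟨t, hrt, ht⟩ := hnwd j r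
  refine ⟨List.replicate j true ++ false :: t, ?_, ?_⟩
  · refine (List.prefix_append s [false]).trans ?_
    rw [hjr]
    exact (List.prefix_append_right_inj _).mpr (List.cons_prefix_cons.mpr ⟨rfl, hrt⟩)
  · rintro ⟨n, τ, hτ, hpre⟩
    obtain ⟨rfl, htτ⟩ := replicate_append_false_cons_prefix hpre
    exact ht (hT j τ hτ t htτ)

theorem replicate_append_false_cons_mem_graft {T : ℕ → Set (List Bool)} {n : ℕ} {τ : List Bool}
    (hτ : τ ∈ T n) : List.replicate n true ++ false :: τ ∈ graft T :=
  ⟨n, τ, hτ, List.prefix_rfl⟩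

def mismatchFrom (e : ℕ → ℕ) (y : ℕ → Bool) (N : ℕ) : Set (ℕ → Bool) :=
  {x | ∀ n, N ≤ n → ¬ EqOn x y (Ico (e n) (e (n + 1)))}

def eventuallyMismatch (e : ℕ → ℕ) (y : ℕ → Bool) : Set (ℕ → Bool) :=
  ⋃ N, mismatchFrom e y N

theorem isNowhereDense_mismatchFrom {e : ℕ → ℕ} (he : StrictMono e) (y : ℕ → Bool) (N : ℕ) :
    IsNowhereDense (mismatchFrom e y N) := by
  refine isNowhereDense_iff_forall_exists_disjoint_cyl.mpr fun s => ?_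
  set n := max N s.length
  let z : ℕ → Bool := fun i => if i < s.length then pad s i else y i
  have hzs : z ∈ cyl s :=
    (res_eq_res_iff.mpr fun i hi => if_pos hi).trans (pad_mem_cyl s)
  have hsn : s.length ≤ e n := (le_max_right _ _).trans (he.id_le n)
  refine ⟨res z (e (n + 1)), (prefix_res_iff (hsn.trans (he.monotone n.le_succ))).mpr hzs,
    disjoint_left.mpr fun x hx hxD => hxD n (le_max_left _ _) fun i hi => ?_⟩
  rw [mem_cyl_res_iff.mp hx i hi.2]
  exact if_neg (not_lt.mpr (hsn.trans hi.1))

theorem isMeagre_eventuallyMismatch {e : ℕ → ℕ} (he : StrictMono e) (y : ℕ → Bool) :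
    IsMeagre (eventuallyMismatch e y) :=
  isMeagre_iUnion fun N => (isNowhereDense_mismatchFrom he y N).isMeagre

theorem exists_forall_disjoint_cyl_append {C : Set (ℕ → Bool)} (hC : IsNowhereDense C)
    (S : Finset (List Bool)) : ∃ w, ∀ s ∈ S, Disjoint (cyl (s ++ w)) C := by
  classical
  induction S using Finset.induction_on with
  | empty => exact ⟨[], by simp⟩
  | insert s S _ ih =>
    obtain ⟨w, hw⟩ := ih
    obtain ⟨t, ⟨v, rfl⟩, ht⟩ := isNowhereDense_iff_forall_exists_disjoint_cyl.mp hC (s ++ w)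
    refine ⟨w ++ v, fun s' hs' => ?_⟩
    rcases Finset.mem_insert.mp hs' with rfl | hs'
    · simpa using ht
    · exact (hw s' hs').mono_left (cyl_anti (by simp))

theorem exists_forall_not_eqOn_Ico {C : Set (ℕ → Bool)} (hC : IsNowhereDense C) (a : ℕ) :
    ∃ b, a < b ∧ ∃ z : ℕ → Bool, ∀ x ∈ C, ¬ EqOn x z (Ico a b) := by
  obtain ⟨w, hw⟩ := exists_forall_disjoint_cyl_append hC (List.finite_length_eq Bool a).toFinset
  refine ⟨a + w.length + 1, by omega, fun i => pad w (i - a), fun x hx hxz => ?_⟩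
  refine disjoint_left.mp (hw (res x a) (by simp)) ?_ hx
  change res x (res x a ++ w).length = res x a ++ w
  rw [List.length_append, length_res, res_add]
  congr 1
  refine (res_eq_res_iff.mpr fun i hi => ?_).trans (pad_mem_cyl w)
  simpa using hxz (show a + i ∈ Ico a (a + w.length + 1) from ⟨by omega, by omega⟩)

theorem exists_strictMono_forall_not_eqOn {C : ℕ → Set (ℕ → Bool)}
    (hC : ∀ n, IsNowhereDense (C n)) :
    ∃ e : ℕ → ℕ, StrictMono e ∧ ∃ y : ℕ → Bool,
      ∀ n, ∀ x ∈ C n, ¬ EqOn x y (Ico (e n) (e (n + 1))) := by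
  choose b hab z hz using fun n => exists_forall_not_eqOn_Ico (hC n)
  let e : ℕ → ℕ := fun n => Nat.rec 0 (fun k a => b k a) n
  have he : StrictMono e := strictMono_nat_of_lt_succ fun n => hab n (e n)
  have hex : ∀ i, ∃ n, i < e (n + 1) := fun i => ⟨i, i.lt_succ_self.trans_le (he.id_le _)⟩
  classical
  have hblock : ∀ n, ∀ i ∈ Ico (e n) (e (n + 1)), Nat.find (hex i) = n := fun n i hi =>
    (Nat.find_eq_iff _).mpr ⟨hi.2, fun m hm => not_lt.mpr ((he.monotone hm).trans hi.1)⟩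
  refine ⟨e, he, fun i => z (Nat.find (hex i)) (e (Nat.find (hex i))) i,
    fun n x hx hxy => hz n (e n) x hx fun i hi => ?_⟩
  rw [hxy hi]
  dsimp only
  rw [hblock n i hi]

theorem exists_subset_eventuallyMismatch {A : Set (ℕ → Bool)} (hA : IsMeagre A) :
    ∃ e : ℕ → ℕ, StrictMono e ∧ ∃ y, A ⊆ eventuallyMismatch e y := by
  obtain ⟨f, hf, hAf⟩ := hA.exists_isNowhereDense_seq
  obtain ⟨e, he, y, hy⟩ := exists_strictMono_forall_not_eqOn (isNowhereDense_accumulate hf)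
  refine ⟨e, he, y, fun x hx => ?_⟩
  obtain ⟨m, hm⟩ := mem_iUnion.mp (hAf hx)
  exact mem_iUnion.mpr ⟨m, fun n hn => hy n x (monotone_accumulate hn (subset_accumulate hm))⟩

theorem exists_subset_mismatchFrom_zero {C : Set (ℕ → Bool)} (hC : IsNowhereDense C) :
    ∃ e : ℕ → ℕ, StrictMono e ∧ ∃ y, C ⊆ mismatchFrom e y 0 := by
  obtain ⟨e, he, y, hy⟩ := exists_strictMono_forall_not_eqOn fun _ => hC
  exact ⟨e, he, y, fun x hx n _ => hy n x hx⟩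

theorem exists_mem_mismatchFrom_zero_not_mem {e e' : ℕ → ℕ} (he : StrictMono e)
    (he' : StrictMono e') {y y' : ℕ → Bool} {Q : Set ℕ} (hQ : ∀ n ∈ Q, n + 1 ∉ Q)
    (hfreq : ∀ N, ∃ n ≥ N, n ∈ Q)
    (hbad : ∀ n ∈ Q, ∀ m, e' n ≤ e m → e (m + 1) ≤ e' (n + 1) →
      ¬ EqOn y y' (Ico (e m) (e (m + 1)))) :
    ∃ x ∈ mismatchFrom e y 0, x ∉ eventuallyMismatch e' y' := by
  classical
  set W := ⋃ n ∈ Q, Ico (e' n) (e' (n + 1))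
  have hW : ∀ {n i}, i ∈ Ico (e' n) (e' (n + 1)) → (i ∈ W ↔ n ∈ Q) := fun hi =>
    ⟨fun hiW => by
      obtain ⟨q, hq, hiq⟩ := mem_iUnion₂.mp hiW
      by_contra hn
      exact disjoint_left.mp (he'.monotone.pairwise_disjoint_on_Ico_succ
        (ne_of_mem_of_not_mem hq hn)) hiq hi,
    fun hn => mem_biUnion hn hi⟩
  refine ⟨fun i => if i ∈ W then y' i else !y i, fun m _ hxy => ?_, ?_⟩
  · by_cases hcov : Ico (e m) (e (m + 1)) ⊆ W
    · obtain ⟨n, hn, hmn⟩ := mem_iUnion₂.mp (hcov ⟨le_rfl, he m.lt_succ_self⟩)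
      -- the `m`-th `e`-interval cannot reach the `(n + 1)`-th `e'`-interval, as `n + 1 ∉ Q`
      have hle : e (m + 1) ≤ e' (n + 1) := by
        by_contra! hlt
        exact hQ n hn ((hW ⟨le_rfl, he' (n + 1).lt_succ_self⟩).mp
          (hcov ⟨hmn.2.le, hlt⟩))
      refine hbad n hn m hmn.1 hle fun i hi => ?_
      simpa [hcov hi] using (hxy hi).symm
    · obtain ⟨i, hi, hiW⟩ := not_subset.mp hcov
      simpa [hiW] using hxy hi
  · rintro ⟨-, ⟨N, rfl⟩, hN⟩
    obtain ⟨n, hNn, hn⟩ := hfreq N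
    exact hN n hNn fun i hi => by simp [(hW hi).mpr hn]

theorem eventually_exists_eqOn_of_eventuallyMismatch_subset {e e' : ℕ → ℕ} (he : StrictMono e)
    (he' : StrictMono e') {y y' : ℕ → Bool}
    (h : eventuallyMismatch e y ⊆ eventuallyMismatch e' y') :
    ∀ᶠ n in atTop, ∃ m, e' n ≤ e m ∧ e (m + 1) ≤ e' (n + 1) ∧
      EqOn y y' (Ico (e m) (e (m + 1))) := by
  by_contra hbad
  set P : ℕ → Prop := fun n => ¬ ∃ m, e' n ≤ e m ∧ e (m + 1) ≤ e' (n + 1) ∧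
      EqOn y y' (Ico (e m) (e (m + 1)))
  -- restricting to one parity keeps infinitely many bad `n`, no two of them adjacent
  obtain ⟨r, hr⟩ : ∃ r, ∃ᶠ n in atTop, P n ∧ n % 2 = r := by
    have hsplit : ∃ᶠ n in atTop, (P n ∧ n % 2 = 0) ∨ (P n ∧ n % 2 = 1) :=
      (not_eventually.mp hbad).mono fun n hn =>
        (Nat.mod_two_eq_zero_or_one n).imp (⟨hn, ·⟩) (⟨hn, ·⟩)
    rcases frequently_or_distrib.mp hsplit with h0 | h1
    exacts [⟨0, h0⟩, ⟨1, h1⟩]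
  obtain ⟨x, hx, hx'⟩ := exists_mem_mismatchFrom_zero_not_mem (Q := {n | P n ∧ n % 2 = r})
    he he' (fun n hn hn' => by have := hn.2; have := hn'.2; omega)
    (frequently_atTop.mp hr) fun n hn m h1 h2 hyy => hn.1 ⟨m, h1, h2, hyy⟩
  exact hx' (h (mem_iUnion_of_mem 0 hx))

theorem exists_mismatchFrom_zero_subset {e e' : ℕ → ℕ} (he : StrictMono e)
    (he' : StrictMono e') {y y' : ℕ → Bool}
    (h : eventuallyMismatch e y ⊆ eventuallyMismatch e' y') :
    ∃ N, mismatchFrom e y 0 ⊆ mismatchFrom e' y' N := by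
  obtain ⟨N, hN⟩ :=
    eventually_atTop.mp (eventually_exists_eqOn_of_eventuallyMismatch_subset he he' h)
  refine ⟨N, fun x hx n hn hxy => ?_⟩
  obtain ⟨m, h1, h2, hyy⟩ := hN n hn
  exact hx m (Nat.zero_le m) fun i hi => (hxy ⟨h1.trans hi.1, hi.2.trans_le h2⟩).trans (hyy hi).symm

theorem exists_tree_base_of_meagre_base {B : Set (Set (ℕ → Bool))} (hB : ∀ Y ∈ B, IsMeagre Y)
    (hcof : ∀ A, IsMeagre A → ∃ Y ∈ B, A ⊆ Y) :
    ∃ g : B × ℕ → Set (List Bool), (∀ p, PerfectTree (g p) ∧ NwdTree (g p)) ∧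
      ∀ T, IsTree T → NwdTree T → ∃ p, T ⊆ g p := by
  choose e he y hy using fun Y : B => exists_subset_eventuallyMismatch (hB Y Y.2)
  refine ⟨fun p => perfectHull (treeOf (mismatchFrom (e p.1) (y p.1) p.2)), fun p =>
    ⟨perfectTree_perfectHull _, nwdTree_perfectHull (isTree_treeOf _)
      (nwdTree_treeOf (isNowhereDense_mismatchFrom (he p.1) _ _))⟩, fun T hT hnwd => ?_⟩
  obtain ⟨e₀, he₀, y₀, hT₀⟩ := exists_subset_mismatchFrom_zero (isNowhereDense_image_pad hT hnwd)
  obtain ⟨Y, hYB, hY⟩ := hcof _ (isMeagre_eventuallyMismatch he₀ y₀)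
  obtain ⟨N, hN⟩ := exists_mismatchFrom_zero_subset he₀ (he ⟨Y, hYB⟩) (hY.trans (hy ⟨Y, hYB⟩))
  exact ⟨(⟨Y, hYB⟩, N), (subset_treeOf_image_pad T).trans
    ((treeOf_mono (hT₀.trans hN)).trans (subset_perfectHull _))⟩

def meagreOfTree (S : Set (List Bool)) : Set (ℕ → Bool) := ⋃ η, branches (subtree S η)

theorem isMeagre_meagreOfTree {S : Set (List Bool)} (hS : NwdTree S) :
    IsMeagre (meagreOfTree S) :=
  isMeagre_iUnion fun η => (isNowhereDense_branches (nwdTree_subtree hS η)).isMeagre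

theorem exists_subset_meagreOfTree {𝒯 : Set (Set (List Bool))}
    (hcof : ∀ T, IsTree T → NwdTree T → ∃ U ∈ 𝒯, T ⊆ U) {A : Set (ℕ → Bool)}
    (hA : IsMeagre A) : ∃ U ∈ 𝒯, A ⊆ meagreOfTree U := by
  obtain ⟨f, hf, hAf⟩ := hA.exists_isNowhereDense_seq
  obtain ⟨U, hU, hTU⟩ := hcof _ (isTree_graft _)
    (nwdTree_graft (fun n => isTree_treeOf (f n)) fun n => nwdTree_treeOf (hf n))
  refine ⟨U, hU, fun x hx => ?_⟩
  obtain ⟨n, hn⟩ := mem_iUnion.mp (hAf hx)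
  refine mem_iUnion.mpr ⟨List.replicate n true ++ [false], fun k => hTU ?_⟩
  simpa using replicate_append_false_cons_mem_graft (subset_branches_treeOf _ hn k)

end CantorTree

open CantorTree

theorem meagerCof_le_mk {B : Set (Set (ℕ → Bool))} (hB : ∀ Y ∈ B, IsMeagre Y)
    (hcof : ∀ A, IsMeagre A → ∃ Y ∈ B, A ⊆ Y) : meagerCof ≤ #B :=
  csInf_le' ⟨B, hB, hcof, rfl⟩

theorem nwdTreeCof_le_mk {𝒯 : Set (Set (List Bool))} (h𝒯 : ∀ U ∈ 𝒯, PerfectTree U ∧ NwdTree U)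
    (hcof : ∀ T, IsTree T → NwdTree T → ∃ U ∈ 𝒯, T ⊆ U) : nwdTreeCof ≤ #𝒯 :=
  csInf_le' ⟨𝒯, h𝒯, hcof, rfl⟩

theorem exists_meagre_base_mk_eq_meagerCof :
    ∃ B : Set (Set (ℕ → Bool)), (∀ Y ∈ B, IsMeagre Y) ∧
      (∀ A, IsMeagre A → ∃ Y ∈ B, A ⊆ Y) ∧ #B = meagerCof :=
  (csInf_mem ⟨_, {Y | IsMeagre Y}, fun _ h => h, fun A hA => ⟨A, hA, subset_rfl⟩, rfl⟩ :
    meagerCof ∈ _)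

theorem exists_tree_base_mk_eq_nwdTreeCof :
    ∃ 𝒯 : Set (Set (List Bool)), (∀ U ∈ 𝒯, PerfectTree U ∧ NwdTree U) ∧
      (∀ T, IsTree T → NwdTree T → ∃ U ∈ 𝒯, T ⊆ U) ∧ #𝒯 = nwdTreeCof :=
  (csInf_mem ⟨_, {U | PerfectTree U ∧ NwdTree U}, fun _ h => h, fun T hT hnwd =>
    ⟨perfectHull T, ⟨perfectTree_perfectHull T, nwdTree_perfectHull hT hnwd⟩,
      subset_perfectHull T⟩, rfl⟩ : nwdTreeCof ∈ _)

theorem aleph0_lt_meagerCof : ℵ₀ < meagerCof := by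
  obtain ⟨B, hB, hcof, hcard⟩ := exists_meagre_base_mk_eq_meagerCof
  rw [← hcard, lt_iff_not_ge, le_aleph0_iff_set_countable]
  exact not_countable_of_isMeagre_cofinal (fun x => (isNowhereDense_singleton x).isMeagre) hB hcof

theorem nwdTreeCof_le_meagerCof : nwdTreeCof ≤ meagerCof := by
  obtain ⟨B, hB, hcof, hcard⟩ := exists_meagre_base_mk_eq_meagerCof
  obtain ⟨g, hg, hgcof⟩ := exists_tree_base_of_meagre_base hB hcof
  calc nwdTreeCof ≤ #(range g) :=
        nwdTreeCof_le_mk (forall_mem_range.mpr hg) fun T hT hnwd =>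
          let ⟨p, hp⟩ := hgcof T hT hnwd; ⟨g p, mem_range_self p, hp⟩
    _ ≤ #(B × ℕ) := mk_range_le
    _ = meagerCof := by
      rw [mk_prod, lift_id, lift_id, mk_nat, hcard, mul_aleph0_eq aleph0_lt_meagerCof.le]

theorem meagerCof_le_nwdTreeCof : meagerCof ≤ nwdTreeCof := by
  obtain ⟨𝒯, h𝒯, hcof, hcard⟩ := exists_tree_base_mk_eq_nwdTreeCof
  calc meagerCof ≤ #(meagreOfTree '' 𝒯) :=
        meagerCof_le_mk (forall_mem_image.mpr fun U hU => isMeagre_meagreOfTree (h𝒯 U hU).2)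
          fun A hA => let ⟨U, hU, hAU⟩ := exists_subset_meagreOfTree hcof hA
            ⟨_, mem_image_of_mem _ hU, hAU⟩
    _ ≤ #𝒯 := mk_image_le
    _ = nwdTreeCof := hcard

theorem meagerCof_eq_nwdTreeCof : meagerCof = nwdTreeCof :=
  meagerCof_le_nwdTreeCof.antisymm nwdTreeCof_le_meagerCof

/-- The cofinality of the meager ideal is `ℵ₁` iff the cofinality of the nowhere dense
ideal is `ℵ₁`. -/
theorem meager_cof_aleph_one_iff_nwd_cof_aleph_one :
    meagerCof = Cardinal.aleph 1 ↔ nwdTreeCof = Cardinal.aleph 1 := by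
  rw [meagerCof_eq_nwdTreeCof]

end
end

section
/- A collection A ⊆ ω^ω of increasing functions is unbounded in the eventual domination order if and only if the set X = {f ∈ ω^ω : some g ∈ A eventually dominates f} is nonmeager in the Baire space ω^ω. -/
/-!
If `h` bounds `A`, the dominated set lies in `{f | f ≤ᶠ h}`, a countable union of closed sets
`{f | ∀ n ≥ N, f n ≤ h n}` with empty interior. Conversely, write the complement of a meagre set
as containing `⋂ k, U k` with `U` decreasing, open and dense. Recursively choose blocks
`[N k, N (k + 1))` and a function `x` such that every `f ≤ x` below `N k` that copies `x` on the
`k`-th block lies in `U k`; this is possible because only finitely many prefixes lie below `x`.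
Then `h n := max {x i | i < N (n + 2)}` bounds `A`: if a monotone `g ∈ A` has `g n > h n` for
infinitely many `n`, the function `x ⊓ g` copies `x` on infinitely many blocks, so it lies in
every `U k`, while it is dominated by `g`.
-/

open Filter Set PiNat TopologicalSpace

theorem Set.Finite.dense_biInter {ι X : Type*} [TopologicalSpace X] {s : Set ι} (hs : s.Finite)
    {U : ι → Set X} (ho : ∀ i ∈ s, IsOpen (U i)) (hd : ∀ i ∈ s, Dense (U i)) :
    Dense (⋂ i ∈ s, U i) := by
  induction s, hs using Set.Finite.induction_on with
  | empty => simp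
  | @insert a s _ hs ih =>
    rw [biInter_insert]
    exact (hd a (mem_insert a s)).inter_of_isOpen_left
      (ih (fun i hi => ho i (mem_insert_of_mem a hi)) fun i hi => hd i (mem_insert_of_mem a hi))
      (ho a (mem_insert a s))

theorem IsMeagre.exists_antitone_isOpen_dense {X : Type*} [TopologicalSpace X] {s : Set X}
    (hs : IsMeagre s) :
    ∃ U : ℕ → Set X, Antitone U ∧ (∀ k, IsOpen (U k)) ∧ (∀ k, Dense (U k)) ∧ ⋂ k, U k ⊆ sᶜ := by
  obtain ⟨S, hSo, hSd, hSc, hS⟩ := mem_residual_iff.1 hs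
  obtain ⟨V, hV⟩ := (hSc.insert univ).exists_eq_range (insert_nonempty _ _)
  have hVS : ∀ j, V j = univ ∨ V j ∈ S := fun j => by
    rw [← mem_insert_iff, hV]
    exact mem_range_self j
  have hVo : ∀ j, IsOpen (V j) := fun j => (hVS j).elim (· ▸ isOpen_univ) (hSo _)
  have hVd : ∀ j, Dense (V j) := fun j => (hVS j).elim (· ▸ dense_univ) (hSd _)
  refine ⟨fun k => ⋂ j ∈ Iic k, V j,
    fun k k' hkk' => biInter_subset_biInter_left (Iic_subset_Iic.2 hkk'),
    fun k => (finite_Iic k).isOpen_biInter fun j _ => hVo j,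
    fun k => (finite_Iic k).dense_biInter (fun j _ => hVo j) fun j _ => hVd j, fun x hx => hS ?_⟩
  intro t ht
  obtain ⟨j, rfl⟩ : t ∈ range V := hV ▸ mem_insert_of_mem _ ht
  exact mem_iInter₂.1 (mem_iInter.1 hx j) j (mem_Iic.2 le_rfl)

namespace PiNat

variable {E : ℕ → Type*}

def splice (n : ℕ) (s y : ∀ i, E i) : ∀ i, E i := fun i => if i < n then s i else y i

theorem image_splice_cylinder (n m : ℕ) (s y : ∀ i, E i) :
    splice n s '' cylinder y m = cylinder (splice n s y) (max m n) := by
  ext f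
  simp only [mem_image, mem_cylinder_iff]
  constructor
  · rintro ⟨z, hz, rfl⟩ i hi
    by_cases hin : i < n
    · simp [splice, hin]
    · simp [splice, hin, hz i (by omega)]
  · intro hf
    refine ⟨splice m y f, fun i hi => by simp [splice, hi], funext fun i => ?_⟩
    by_cases hin : i < n
    · simpa [splice, hin] using (hf i (by omega)).symm
    · by_cases him : i < m
      · simpa [splice, hin, him] using (hf i (by omega)).symm
      · simp [splice, hin, him]

variable [∀ i, TopologicalSpace (E i)]

theorem continuous_splice (n : ℕ) (s : ∀ i, E i) : Continuous (splice n s) :=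
  continuous_pi fun i => by
    by_cases hi : i < n
    · simpa [splice, hi] using continuous_const
    · simpa [splice, hi] using continuous_apply i

theorem isOpenMap_splice [∀ i, DiscreteTopology (E i)] (n : ℕ) (s : ∀ i, E i) :
    IsOpenMap (splice n s) :=
  (isTopologicalBasis_cylinders E).isOpenMap_iff.2 <| by
    rintro _ ⟨y, m, rfl⟩
    rw [image_splice_cylinder]
    exact isOpen_cylinder E _ _


theorem exists_forall_mem_cylinder {E : ℕ → Type*} {N : ℕ → ℕ} (hN : StrictMono N)
    {x : ℕ → ∀ i, E i} (hx : ∀ k, x (k + 1) ∈ cylinder (x k) (N k)) :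
    ∃ y, ∀ k, y ∈ cylinder (x k) (N k) := by
  have hchain : ∀ k k', k ≤ k' → x k' ∈ cylinder (x k) (N k) := by
    intro k k' hkk'
    induction hkk' with
    | refl => exact self_mem_cylinder _ _
    | step hle ih => exact fun i hi => (hx _ i (hi.trans_le (hN.monotone hle))).trans (ih i hi)
  refine ⟨fun i => x (i + 1) i, fun k i hi => ?_⟩
  rcases le_total k (i + 1) with hk | hk
  · exact hchain k (i + 1) hk i hi
  · exact (hchain (i + 1) k hk i ((Nat.lt_succ_self i).trans_le hN.le_apply)).symm

end PiNat

theorem isMeagre_setOf_eventually_le (h : ℕ → ℕ) :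
    IsMeagre {f : ℕ → ℕ | ∀ᶠ n in atTop, f n ≤ h n} := by
  have hunion : {f : ℕ → ℕ | ∀ᶠ n in atTop, f n ≤ h n} = ⋃ N, {f | ∀ n ≥ N, f n ≤ h n} := by
    ext f
    simp [eventually_atTop]
  rw [hunion]
  refine isMeagre_iUnion fun N => IsNowhereDense.isMeagre ?_
  have hclosed : IsClosed {f : ℕ → ℕ | ∀ n ≥ N, f n ≤ h n} := by
    simp only [ofPred_forall]
    exact isClosed_iInter fun n => isClosed_iInter fun _ =>
      isClosed_le (continuous_apply n) continuous_const
  rw [hclosed.isNowhereDense_iff, interior_eq_empty_iff_dense_compl,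
    (isTopologicalBasis_cylinders _).dense_iff]
  rintro _ ⟨y, m, rfl⟩ -
  refine ⟨Function.update y (max m N) (h (max m N) + 1),
    cylinder_anti _ (le_max_left m N) (update_mem_cylinder _ _ _), fun hle => ?_⟩
  simpa using hle (max m N) (le_max_right m N)

theorem exists_block_forcing {U : Set (ℕ → ℕ)} (hUo : IsOpen U) (hUd : Dense U) (n : ℕ)
    (t : ℕ → ℕ) :
    ∃ σ ∈ cylinder t n, ∃ m > n, ∀ f : ℕ → ℕ, (∀ i < n, f i ≤ t i) →
      (∀ i ∈ Ico n m, f i = σ i) → f ∈ U := by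
  let pre : ((i : Fin n) → Fin (t i + 1)) → ℕ → ℕ := fun v i => if hi : i < n then v ⟨i, hi⟩ else 0
  set V := ⋂ v ∈ univ, splice n (pre v) ⁻¹' U
  have hVo : IsOpen V := finite_univ.isOpen_biInter fun v _ => hUo.preimage (continuous_splice _ _)
  have hVd : Dense V := finite_univ.dense_biInter (fun v _ => hUo.preimage (continuous_splice _ _))
    fun v _ => hUd.preimage (isOpenMap_splice _ _)
  obtain ⟨σ, hσt, hσV⟩ :=
    hVd.inter_open_nonempty _ (isOpen_cylinder _ t n) ⟨t, self_mem_cylinder _ _⟩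
  obtain ⟨_, ⟨y, m, rfl⟩, hσy, hsub⟩ :=
    (isTopologicalBasis_cylinders _).exists_subset_of_mem_open hσV hVo
  rw [← mem_cylinder_iff_eq.1 hσy] at hsub
  refine ⟨σ, hσt, max m n + 1, by omega, fun f hft hfσ => ?_⟩
  have hz : splice n σ f ∈ V := hsub fun i hi => by
    by_cases hin : i < n
    · simp [splice, hin]
    · simpa [splice, hin] using hfσ i ⟨by omega, by omega⟩
  let v : (i : Fin n) → Fin (t i + 1) := fun i => ⟨f i, Nat.lt_succ_of_le (hft i i.2)⟩
  have hf : splice n (pre v) (splice n σ f) = f :=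
    funext fun i => by by_cases hi : i < n <;> simp [splice, pre, v, hi]
  rw [← hf]
  exact mem_iInter₂.1 hz v (mem_univ v)

theorem exists_block_sequence_forcing {U : ℕ → Set (ℕ → ℕ)} (hUo : ∀ k, IsOpen (U k))
    (hUd : ∀ k, Dense (U k)) :
    ∃ (N : ℕ → ℕ) (x : ℕ → ℕ), StrictMono N ∧ ∀ k f, (∀ i < N k, f i ≤ x i) →
      (∀ i ∈ Ico (N k) (N (k + 1)), f i = x i) → f ∈ U k := by
  choose σ hσ m hm hforce using fun k => exists_block_forcing (hUo k) (hUd k)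
  let p : ℕ → ℕ × (ℕ → ℕ) := fun k => Nat.rec (0, 0) (fun k q => (m k q.1 q.2, σ k q.1 q.2)) k
  have hN : StrictMono fun k => (p k).1 := strictMono_nat_of_lt_succ fun k => hm k _ _
  obtain ⟨x, hx⟩ := exists_forall_mem_cylinder hN (x := fun k => (p k).2) fun k => hσ k _ _
  refine ⟨fun k => (p k).1, x, hN, fun k f hfx hfσ => hforce k _ _ f
    (fun i hi => hx k i hi ▸ hfx i hi) fun i hi => (hfσ i hi).trans (hx (k + 1) i hi.2)⟩

theorem exists_forall_monotone_frequently_lt_exists_le_mem_iInter {U : ℕ → Set (ℕ → ℕ)}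
    (hU : Antitone U) (hUo : ∀ k, IsOpen (U k)) (hUd : ∀ k, Dense (U k)) :
    ∃ h : ℕ → ℕ, ∀ g : ℕ → ℕ, Monotone g → (∃ᶠ n in atTop, h n < g n) →
      ∃ f ≤ g, f ∈ ⋂ k, U k := by
  obtain ⟨N, x, hN, hx⟩ := exists_block_sequence_forcing hUo hUd
  refine ⟨fun n => (Finset.range (N (n + 2))).sup x, fun g hg hgh =>
    ⟨x ⊓ g, inf_le_right, mem_iInter.2 fun j => ?_⟩⟩
  obtain ⟨n, hjn, hn⟩ := hgh.forall_exists_of_atTop j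
  refine hU (show j ≤ n + 1 by omega) (hx (n + 1) _ (fun i _ => inf_le_left) fun i hi => ?_)
  have hxg : x i ≤ g i := calc
    x i ≤ (Finset.range (N (n + 2))).sup x := Finset.le_sup (Finset.mem_range.2 hi.2)
    _ ≤ g n := hn.le
    _ ≤ g i := hg ((Nat.le_succ n).trans (hN.le_apply.trans hi.1))
  exact inf_eq_left.2 hxg

/-- A collection `A` of increasing functions in `ω^ω` is unbounded in the eventual
domination order iff the set `X` of functions eventually dominated by some member of `A`
is nonmeager in the Baire space `ω^ω`. -/
theorem unbounded_iff_dominated_set_nonmeager (A : Set (ℕ → ℕ))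
    (hA : ∀ f ∈ A, Monotone f) :
    (¬ ∃ h : ℕ → ℕ, ∀ f ∈ A, ∀ᶠ n in atTop, f n ≤ h n) ↔
      ¬ IsMeagre {f : ℕ → ℕ | ∃ g ∈ A, ∀ᶠ n in atTop, f n ≤ g n} := by
  rw [not_iff_not]
  constructor
  · rintro ⟨h, hAh⟩
    refine (isMeagre_setOf_eventually_le h).mono ?_
    rintro f ⟨g, hg, hfg⟩
    exact (hfg.and (hAh g hg)).mono fun n hn => hn.1.trans hn.2
  · intro hX
    obtain ⟨U, hU, hUo, hUd, hXU⟩ := hX.exists_antitone_isOpen_dense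
    obtain ⟨h, hh⟩ := exists_forall_monotone_frequently_lt_exists_le_mem_iInter hU hUo hUd
    refine ⟨h, fun g hg => ?_⟩
    by_contra hgh
    obtain ⟨f, hfg, hfU⟩ := hh g (hA g hg) ((not_eventually.1 hgh).mono fun n => not_le.1)
    exact hXU hfU ⟨g, hg, .of_forall hfg⟩
end
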